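/- arXiv:2305.10587 — 5 statements merged into one kernel-verified Lean document; each statement's English description precedes it below -/
import Mathlib

section
/- Let N ≥ 2, 2 ≤ k ≤ N, and let c : {0,1}^N → ℝ be any correlator function. Then the N-partite Svetlichny expression decomposes as S_N^+[c] = Σ_{y ∈ {0,1}^{N−k}, w(y) odd} (−1)^{w(y)(w(y)+1)/2} S_{k,y}^−[c] + Σ_{y ∈ {0,1}^{N−k}, w(y) even} (−1)^{w(y)(w(y)+1)/2} S_{k,y}^+[c]. -/
/-- Hamming weight of a bit string. -/
def wt {n : ℕ} (x : Fin n → Fin 2) : ℕ := ∑ i, (x i : ℕ)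

/-- The `n`-partite Svetlichny expression `S_n^+` of a correlator function. -/
def Splus {n : ℕ} (c : (Fin n → Fin 2) → ℝ) : ℝ :=
  ∑ x : Fin n → Fin 2, (-1 : ℝ) ^ (wt x * (wt x + 1) / 2) * c x

/-- The `n`-partite Svetlichny expression `S_n^-` of a correlator function. -/
def Sminus {n : ℕ} (c : (Fin n → Fin 2) → ℝ) : ℝ :=
  ∑ x : Fin n → Fin 2, (-1 : ℝ) ^ (wt x * (wt x - 1) / 2) * c x

/-- The restricted `k`-partite Svetlichny expression `S_{k,y}^+`, where the inputs of the
last `m` (grouped) coordinates are fixed to `y`. -/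
def SplusRes {k m : ℕ} (c : (Fin (k + m) → Fin 2) → ℝ) (y : Fin m → Fin 2) : ℝ :=
  ∑ z : Fin k → Fin 2, (-1 : ℝ) ^ (wt z * (wt z + 1) / 2) * c (Fin.append z y)

/-- The restricted `k`-partite Svetlichny expression `S_{k,y}^-`. -/
def SminusRes {k m : ℕ} (c : (Fin (k + m) → Fin 2) → ℝ) (y : Fin m → Fin 2) : ℝ :=
  ∑ z : Fin k → Fin 2, (-1 : ℝ) ^ (wt z * (wt z - 1) / 2) * c (Fin.append z y)



lemma two_mul_tri (n : ℕ) : 2 * (n * (n+1) / 2) = n * (n+1) :=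
  Nat.mul_div_cancel' (even_iff_two_dvd.mp (Nat.even_mul_succ_self n))

lemma two_mul_gi (n : ℕ) : 2 * (n * (n-1) / 2) = n * (n-1) := by
  apply Nat.mul_div_cancel'
  rcases Nat.even_or_odd n with h | h
  · exact Dvd.dvd.mul_right (even_iff_two_dvd.mp h) _
  · exact Dvd.dvd.mul_left (even_iff_two_dvd.mp (Nat.Odd.sub_odd h odd_one)) _

lemma tri_add (a b : ℕ) : (a+b)*(a+b+1)/2 = a*(a+1)/2 + b*(b+1)/2 + a*b := by
  refine Nat.eq_of_mul_eq_mul_left (by norm_num : 0 < 2) ?_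
  rw [two_mul_tri]
  have h : 2*(a*(a+1)/2 + b*(b+1)/2 + a*b)
      = 2*(a*(a+1)/2) + 2*(b*(b+1)/2) + 2*(a*b) := by ring
  rw [h, two_mul_tri, two_mul_tri]
  ring

lemma tri_eq_gi_add (a : ℕ) : a*(a+1)/2 = a*(a-1)/2 + a := by
  refine Nat.eq_of_mul_eq_mul_left (by norm_num : 0 < 2) ?_
  rw [two_mul_tri]
  have h : 2*(a*(a-1)/2 + a) = 2*(a*(a-1)/2) + 2*a := by ring
  rw [h, two_mul_gi]
  cases a with
  | zero => rfl
  | succ n => simp [Nat.succ_sub_one]; ring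

/-- Decomposition of the `N`-partite Svetlichny expression (`N = k + m ≥ 2`, `2 ≤ k ≤ N`)
into restricted `k`-partite Svetlichny expressions. -/
theorem stmt_2 (k m : ℕ) (hk : 2 ≤ k) (c : (Fin (k + m) → Fin 2) → ℝ) :
    Splus c =
      (∑ y ∈ Finset.univ.filter (fun y : Fin m → Fin 2 => Odd (wt y)),
        (-1 : ℝ) ^ (wt y * (wt y + 1) / 2) * SminusRes c y) +
      ∑ y ∈ Finset.univ.filter (fun y : Fin m → Fin 2 => Even (wt y)),
        (-1 : ℝ) ^ (wt y * (wt y + 1) / 2) * SplusRes c y := by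
  have wt_append : ∀ (z : Fin k → Fin 2) (y : Fin m → Fin 2),
      wt (Fin.append z y) = wt z + wt y := by
    intro z y
    unfold wt
    rw [Fin.sum_univ_add]
    congr 1 <;> [skip; skip] <;> exact Finset.sum_congr rfl fun i _ => by
      first
      | rw [Fin.append_left]
      | rw [Fin.append_right]
  have key : Splus c = ∑ y : Fin m → Fin 2, ∑ z : Fin k → Fin 2,
      (-1:ℝ) ^ ((wt z + wt y) * (wt z + wt y + 1) / 2) * c (Fin.append z y) := by
    rw [Splus, ← Equiv.sum_comp (Fin.appendEquiv k m), Fintype.sum_prod_type,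
      Finset.sum_comm]
    refine Finset.sum_congr rfl fun y _ => Finset.sum_congr rfl fun z _ => ?_
    have h0 : (Fin.appendEquiv k m) (z, y) = Fin.append z y := rfl
    rw [h0, wt_append]
  rw [key]
  have step : ∀ y : Fin m → Fin 2,
      (∑ z : Fin k → Fin 2,
        (-1:ℝ) ^ ((wt z + wt y) * (wt z + wt y + 1) / 2) * c (Fin.append z y)) =
      if Odd (wt y) then (-1:ℝ) ^ (wt y * (wt y + 1) / 2) * SminusRes c y
      else (-1:ℝ) ^ (wt y * (wt y + 1) / 2) * SplusRes c y := by
    intro y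
    by_cases hy : Odd (wt y)
    · rw [if_pos hy, SminusRes, Finset.mul_sum]
      refine Finset.sum_congr rfl fun z _ => ?_
      rw [← mul_assoc, ← pow_add]
      congr 1
      rw [tri_add, tri_eq_gi_add (wt z)]
      have h1 : wt z * (wt z - 1) / 2 + wt z + wt y * (wt y + 1) / 2 + wt z * wt y
          = (wt y * (wt y + 1) / 2 + wt z * (wt z - 1) / 2) + wt z * (wt y + 1) := by
        ring
      rw [h1, pow_add, (hy.add_one.mul_left _).neg_one_pow, mul_one]
    · rw [if_neg hy, SplusRes, Finset.mul_sum]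
      refine Finset.sum_congr rfl fun z _ => ?_
      rw [← mul_assoc, ← pow_add]
      congr 1
      rw [tri_add]
      have hEven : Even (wt y) := Nat.not_odd_iff_even.mp hy
      have h1 : wt z * (wt z + 1) / 2 + wt y * (wt y + 1) / 2 + wt z * wt y
          = (wt y * (wt y + 1) / 2 + wt z * (wt z + 1) / 2) + wt z * wt y := by
        ring
      rw [h1, pow_add, (hEven.mul_left _).neg_one_pow, mul_one]
  rw [Finset.sum_congr rfl (fun y _ => step y), Finset.sum_ite]
  congr 1
  refine Finset.sum_congr ?_ fun _ _ => rfl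
  ext y
  simp [Nat.not_odd_iff_even]
end

section
/- (Proposition A2, cluster version) Let N ≥ 2 and let {S_1,…,S_k} be a partition of {1,…,N} into k nonempty disjoint blocks, with a designated element j_i ∈ S_i chosen in each block. Let c : {0,1}^N → ℝ be any correlator function. For an assignment y of bits to all non-designated positions and z ∈ {0,1}^k, let x(z,y) ∈ {0,1}^N be the string whose j_i-th coordinate is z_i and whose remaining coordinates agree with y. Define S_{k,y}^±[c] = Σ_{z ∈ {0,1}^k} (−1)^{w(z)(w(z)±1)/2} c(x(z,y)). Then |S_N^+[c]| ≤ 2^{N−k} · max_{y, ε∈{+,−}} |S_{k,y}^ε[c]|; in particular, if the N parties achieve value s_N = |S_N^+[c]|, there exist y and ε with |S_{k,y}^ε[c]| ≥ s_N / 2^{N−k}. -/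
/-- Given a block assignment `B : Fin N → Fin k` and designated elements `j : Fin k → Fin N`,
the input string `x(z,y)` whose `j i`-th coordinate is `z i` and whose remaining coordinates
agree with `y`. -/
def clusterX {N k : ℕ} (B : Fin N → Fin k) (j : Fin k → Fin N)
    (z : Fin k → Fin 2) (y : Fin N → Fin 2) : Fin N → Fin 2 :=
  fun p => if ∃ i, j i = p then z (B p) else y p

/-- The restricted `k`-partite Svetlichny expression `S_{k,y}^+` in the cluster scenario. -/
def SplusCluster {N k : ℕ} (B : Fin N → Fin k) (j : Fin k → Fin N)
    (c : (Fin N → Fin 2) → ℝ) (y : Fin N → Fin 2) : ℝ :=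
  ∑ z : Fin k → Fin 2, (-1 : ℝ) ^ (wt z * (wt z + 1) / 2) * c (clusterX B j z y)

/-- The restricted `k`-partite Svetlichny expression `S_{k,y}^-` in the cluster scenario. -/
def SminusCluster {N k : ℕ} (B : Fin N → Fin k) (j : Fin k → Fin N)
    (c : (Fin N → Fin 2) → ℝ) (y : Fin N → Fin 2) : ℝ :=
  ∑ z : Fin k → Fin 2, (-1 : ℝ) ^ (wt z * (wt z - 1) / 2) * c (clusterX B j z y)

/-! Every input `x ∈ {0,1}^N` is uniquely `x(z,y)` with `y` vanishing at the designated
positions, and then `wt x = wt z + wt y`. For triangular numbers `T n = n(n+1)/2` one has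
`T (m + w) = T m + T w + m w`, so `(-1)^T(wt x)` equals `(-1)^T(wt y)` times `(-1)^T(wt z)` when
`wt y` is even and times `(-1)^(T(wt z) - wt z)` when it is odd. Hence `S_N^+` is a signed sum of
the `2^(N-k)` expressions `S_{k,y}^±`, and the triangle inequality gives the bound. -/

open Finset

lemma triangle_add (m w : ℕ) :
    (m + w) * (m + w + 1) / 2 = m * (m + 1) / 2 + w * (w + 1) / 2 + m * w := by
  obtain ⟨a, ha⟩ := Nat.even_mul_succ_self m
  obtain ⟨b, hb⟩ := Nat.even_mul_succ_self w
  have h : (m + w) * (m + w + 1) = 2 * (a + b + m * w) := by linear_combination ha + hb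
  rw [h, ha, hb]
  omega

lemma triangle_eq_add (m : ℕ) : m * (m + 1) / 2 = m * (m - 1) / 2 + m := by
  cases m with
  | zero => rfl
  | succ n =>
    rw [Nat.add_sub_cancel, show (n + 1) * (n + 1 + 1) = (n + 1) * n + 2 * (n + 1) by ring]
    omega

section Sign

variable {R : Type*} [Monoid R] [HasDistribNeg R]

lemma neg_one_pow_triangle_add_of_even {w : ℕ} (hw : Even w) (m : ℕ) :
    (-1 : R) ^ ((m + w) * (m + w + 1) / 2) =
      (-1) ^ (w * (w + 1) / 2) * (-1) ^ (m * (m + 1) / 2) := by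
  rw [triangle_add, pow_add, pow_add, (hw.mul_left m).neg_one_pow, mul_one, pow_mul_comm]

lemma neg_one_pow_triangle_add_of_odd {w : ℕ} (hw : Odd w) (m : ℕ) :
    (-1 : R) ^ ((m + w) * (m + w + 1) / 2) =
      (-1) ^ (w * (w + 1) / 2) * (-1) ^ (m * (m - 1) / 2) := by
  have hmw : (-1 : R) ^ (m * w) = (-1) ^ m := by
    rcases Nat.even_or_odd m with hm | hm
    · rw [(hm.mul_right w).neg_one_pow, hm.neg_one_pow]
    · rw [(hm.mul hw).neg_one_pow, hm.neg_one_pow]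
  have hshift : (-1 : R) ^ (m * (m + 1) / 2) * (-1) ^ m = (-1) ^ (m * (m - 1) / 2) := by
    rw [← pow_add, triangle_eq_add, add_assoc, ← two_mul, pow_add, pow_mul, neg_one_sq, one_pow,
      mul_one]
  rw [triangle_add, pow_add, pow_add, hmw, pow_mul_comm, mul_assoc, hshift]

end Sign

lemma wt_eq_sum_comp_add_sum_compl {N k : ℕ} {j : Fin k → Fin N} (hj : Function.Injective j)
    (x : Fin N → Fin 2) :
    wt x = ∑ i, (x (j i) : ℕ) + ∑ p ∈ (univ.image j)ᶜ, (x p : ℕ) := by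
  rw [wt, ← sum_add_sum_compl (univ.image j), sum_image hj.injOn]

section Cluster

variable {N k : ℕ} {B : Fin N → Fin k} {j : Fin k → Fin N}

/-- `clusterX B j z y` ignores `y` at the designated positions, so these inputs represent every
choice of `y`. -/
def clusterBase (j : Fin k → Fin N) : Finset (Fin N → Fin 2) :=
  univ.filter fun y => ∀ i, y (j i) = 0

lemma mem_clusterBase {y : Fin N → Fin 2} : y ∈ clusterBase j ↔ ∀ i, y (j i) = 0 := by
  simp [clusterBase]

lemma clusterX_apply_self (hj : ∀ i, B (j i) = i) (z : Fin k → Fin 2) (y : Fin N → Fin 2)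
    (i : Fin k) : clusterX B j z y (j i) = z i := by
  rw [clusterX, if_pos ⟨i, rfl⟩, hj]

lemma clusterX_apply_of_not_exists {p : Fin N} (hp : ¬∃ i, j i = p) (z : Fin k → Fin 2)
    (y : Fin N → Fin 2) : clusterX B j z y p = y p := by
  rw [clusterX, if_neg hp]

lemma clusterX_zero_clusterX (hj : ∀ i, B (j i) = i) (z : Fin k → Fin 2) {y : Fin N → Fin 2}
    (hy : y ∈ clusterBase j) : clusterX B j 0 (clusterX B j z y) = y := by
  funext p
  by_cases hp : ∃ i, j i = p
  · obtain ⟨i, rfl⟩ := hp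
    rw [clusterX_apply_self hj, mem_clusterBase.1 hy, Pi.zero_apply]
  · rw [clusterX_apply_of_not_exists hp, clusterX_apply_of_not_exists hp]

lemma clusterX_comp_clusterX_zero (hj : ∀ i, B (j i) = i) (x : Fin N → Fin 2) :
    clusterX B j (x ∘ j) (clusterX B j 0 x) = x := by
  funext p
  by_cases hp : ∃ i, j i = p
  · obtain ⟨i, rfl⟩ := hp
    rw [clusterX_apply_self hj, Function.comp_apply]
  · rw [clusterX_apply_of_not_exists hp, clusterX_apply_of_not_exists hp]

lemma clusterX_mem_clusterBase (hj : ∀ i, B (j i) = i) (x : Fin N → Fin 2) :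
    clusterX B j 0 x ∈ clusterBase j :=
  mem_clusterBase.2 fun i => clusterX_apply_self hj 0 x i

lemma sum_eq_sum_clusterBase_sum_clusterX {M : Type*} [AddCommMonoid M] (hj : ∀ i, B (j i) = i)
    (f : (Fin N → Fin 2) → M) :
    ∑ x, f x = ∑ y ∈ clusterBase j, ∑ z, f (clusterX B j z y) := by
  rw [← sum_product (clusterBase j) univ fun yz => f (clusterX B j yz.2 yz.1), eq_comm]
  refine sum_nbij' (fun yz => clusterX B j yz.2 yz.1) (fun x => (clusterX B j 0 x, x ∘ j))
    (fun _ _ => mem_univ _)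
    (fun x _ => mem_product.2 ⟨clusterX_mem_clusterBase hj x, mem_univ _⟩)
    (fun ⟨y, z⟩ hyz => ?_) (fun x _ => clusterX_comp_clusterX_zero hj x) fun _ _ => rfl
  exact Prod.ext (clusterX_zero_clusterX hj z (mem_product.1 hyz).1)
    (funext (clusterX_apply_self hj z y))

lemma card_clusterBase (hj : ∀ i, B (j i) = i) : #(clusterBase j) = 2 ^ (N - k) := by
  have hk : k ≤ N := by
    simpa using Fintype.card_le_of_injective j (Function.LeftInverse.injective hj)
  have hcard := sum_eq_sum_clusterBase_sum_clusterX hj fun _ => (1 : ℕ)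
  simp only [sum_const, card_univ, Fintype.card_fun, Fintype.card_fin, smul_eq_mul,
    mul_one] at hcard
  rw [← pow_sub_mul_pow 2 hk] at hcard
  exact (Nat.eq_of_mul_eq_mul_right (by positivity) hcard).symm

lemma wt_clusterX (hj : ∀ i, B (j i) = i) (z : Fin k → Fin 2) {y : Fin N → Fin 2}
    (hy : y ∈ clusterBase j) : wt (clusterX B j z y) = wt z + wt y := by
  have hinj : Function.Injective j := Function.LeftInverse.injective hj
  rw [wt_eq_sum_comp_add_sum_compl hinj, wt_eq_sum_comp_add_sum_compl hinj y]
  have hoff : ∀ p ∈ (univ.image j)ᶜ, (clusterX B j z y p : ℕ) = y p := fun p hp => by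
    rw [clusterX_apply_of_not_exists (by simpa using hp)]
  simp only [clusterX_apply_self hj, mem_clusterBase.1 hy, sum_congr rfl hoff, Fin.val_zero,
    sum_const_zero, zero_add, wt]

lemma abs_sum_sign_clusterX_le (hj : ∀ i, B (j i) = i) (c : (Fin N → Fin 2) → ℝ)
    {y : Fin N → Fin 2} (hy : y ∈ clusterBase j) :
    |∑ z, (-1 : ℝ) ^ (wt (clusterX B j z y) * (wt (clusterX B j z y) + 1) / 2) *
        c (clusterX B j z y)| ≤ max |SminusCluster B j c y| |SplusCluster B j c y| := by
  simp only [wt_clusterX hj _ hy]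
  rcases Nat.even_or_odd (wt y) with hw | hw
  · simp only [neg_one_pow_triangle_add_of_even hw, mul_assoc, ← mul_sum, ← SplusCluster.eq_1,
      abs_mul, abs_neg_one_pow, one_mul]
    exact le_max_right _ _
  · simp only [neg_one_pow_triangle_add_of_odd hw, mul_assoc, ← mul_sum, ← SminusCluster.eq_1,
      abs_mul, abs_neg_one_pow, one_mul]
    exact le_max_left _ _

end Cluster

theorem stmt_4_general (N k : ℕ) (B : Fin N → Fin k)
    (j : Fin k → Fin N) (hj : ∀ i, B (j i) = i) (c : (Fin N → Fin 2) → ℝ) :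
    |Splus c| ≤ 2 ^ (N - k) *
      Finset.univ.sup' Finset.univ_nonempty
        (fun y : Fin N → Fin 2 =>
          max |SminusCluster B j c y| |SplusCluster B j c y|) ∧
    ∃ y : Fin N → Fin 2,
      |Splus c| / 2 ^ (N - k) ≤ |SminusCluster B j c y| ∨
        |Splus c| / 2 ^ (N - k) ≤ |SplusCluster B j c y| := by
  set f := fun y : Fin N → Fin 2 => max |SminusCluster B j c y| |SplusCluster B j c y|
  have hbound : |Splus c| ≤ 2 ^ (N - k) * univ.sup' univ_nonempty f := by
    rw [Splus, sum_eq_sum_clusterBase_sum_clusterX hj]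
    refine (abs_sum_le_sum_abs _ _).trans
      ((sum_le_card_nsmul _ _ (univ.sup' univ_nonempty f) fun y hy => ?_).trans_eq ?_)
    · exact (abs_sum_sign_clusterX_le hj c hy).trans (le_sup' f (mem_univ y))
    · rw [card_clusterBase hj, nsmul_eq_mul, Nat.cast_pow, Nat.cast_ofNat]
  refine ⟨hbound, ?_⟩
  obtain ⟨y, -, hy⟩ := exists_mem_eq_sup' univ_nonempty f
  refine ⟨y, le_max_iff.1 ?_⟩
  rw [div_le_iff₀ (by positivity), mul_comm]
  rwa [hy] at hbound

/-- Proposition A2 (cluster version): for any partition of the `N` parties into `k` nonempty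
blocks (block assignment `B`, designated elements `j`),
`|S_N^+[c]| ≤ 2^{N-k} · max_{y,ε} |S_{k,y}^ε[c]|`; in particular some restricted
`k`-partite Svetlichny expression achieves at least `|S_N^+[c]| / 2^{N-k}`. -/
theorem stmt_4 (N k : ℕ) (hN : 2 ≤ N) (B : Fin N → Fin k) (hB : Function.Surjective B)
    (j : Fin k → Fin N) (hj : ∀ i, B (j i) = i) (c : (Fin N → Fin 2) → ℝ) :
    |Splus c| ≤ 2 ^ (N - k) *
      Finset.univ.sup' Finset.univ_nonempty
        (fun y : Fin N → Fin 2 =>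
          max |SminusCluster B j c y| |SplusCluster B j c y|) ∧
    ∃ y : Fin N → Fin 2,
      |Splus c| / 2 ^ (N - k) ≤ |SminusCluster B j c y| ∨
        |Splus c| / 2 ^ (N - k) ≤ |SplusCluster B j c y| :=
  stmt_4_general N k B j hj c
end

section
/- (Classical bound of the Svetlichny inequality) Let N ≥ 2 and suppose c : {0,1}^N → ℝ admits a hybrid bipartite decomposition: there is a finite index set Λ, weights p_λ ≥ 0 with Σ_λ p_λ = 1, for each λ a nonempty proper subset P_λ ⊊ {1,…,N}, and functions f_λ : {0,1}^{P_λ} → [−1,1], g_λ : {0,1}^{P_λ^c} → [−1,1], such that c(x) = Σ_λ p_λ f_λ(x|_{P_λ}) g_λ(x|_{P_λ^c}) for all x ∈ {0,1}^N. Then |S_N^+[c]| ≤ 2^{N−1} and |S_N^−[c]| ≤ 2^{N−1}. -/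
namespace SvetAux

noncomputable def sg (w : ℕ) : ℝ := (-1) ^ (w * (w + 1) / 2)
noncomputable def sgm (w : ℕ) : ℝ := (-1) ^ (w * (w - 1) / 2)

lemma abs_sg (w : ℕ) : |sg w| = 1 := by simp [sg, abs_pow]

lemma abs_sgm (w : ℕ) : |sgm w| = 1 := by simp [sgm, abs_pow]

lemma sg_step (w : ℕ) : sg (w + 1) = sg w * (-1) ^ (w + 1) := by
  have h1 : (w + 1) * (w + 1 + 1) = w * (w + 1) + 2 * (w + 1) := by ring
  obtain ⟨t, ht⟩ := Nat.even_mul_succ_self w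
  have h2 : (w + 1) * (w + 1 + 1) / 2 = w * (w + 1) / 2 + (w + 1) := by omega
  rw [sg, sg, h2, pow_add]

lemma sg_add (a b : ℕ) : sg (a + b) = sg a * sg b * (-1) ^ (a * b) := by
  induction b with
  | zero => simp [sg]
  | succ b ih =>
    have h : a + (b + 1) = (a + b) + 1 := by ring
    rw [h, sg_step, ih, sg_step, show a * (b + 1) = a * b + a by ring,
        pow_add, pow_add, pow_add]
    ring

lemma sg_eq_sgm (w : ℕ) : sg w = sgm w * (-1) ^ w := by
  match w with
  | 0 => simp [sg, sgm]
  | (n + 1) =>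
    have h1 : (n + 1) * (n + 1 + 1) = (n + 1) * n + 2 * (n + 1) := by ring
    obtain ⟨t, ht⟩ := Nat.even_mul_succ_self n
    have ht' : (n + 1) * n = t + t := by
      have : n * (n + 1) = (n + 1) * n := by ring
      omega
    have h3 : (n + 1) * (n + 1 - 1) = (n + 1) * n := by rw [Nat.add_sub_cancel]
    have h2 : (n + 1) * (n + 1 + 1) / 2 = (n + 1) * (n + 1 - 1) / 2 + (n + 1) := by omega
    rw [sg, sgm, h2, pow_add]

lemma neg_one_pow_sq (w : ℕ) : ((-1 : ℝ)) ^ w * (-1) ^ w = 1 := by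
  rw [← pow_add]
  exact Even.neg_one_pow ⟨w, rfl⟩

lemma sgm_eq (w : ℕ) : sgm w = sg w * (-1) ^ w := by
  rw [sg_eq_sgm, mul_assoc, neg_one_pow_sq, mul_one]

lemma sg_split (a b : ℕ) :
    sg (a + b) = (1 + (-1 : ℝ) ^ a) / 2 * sg a * (sg b)
      + (1 - (-1 : ℝ) ^ a) / 2 * sg a * (sgm b) := by
  rw [sg_add, sgm_eq]
  rcases Nat.even_or_odd a with h | h
  · rw [h.neg_one_pow, (h.mul_right b).neg_one_pow]; ring
  · rw [pow_mul, h.neg_one_pow]; ring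

def wtS {ι : Type} [Fintype ι] (u : ι → Fin 2) : ℕ := ∑ i, (u i : ℕ)

set_option maxHeartbeats 1000000 in
lemma parity_sum {ι : Type} [Fintype ι] [DecidableEq ι] [Nonempty ι] :
    ∑ u : ι → Fin 2, (-1 : ℝ) ^ (wtS u) = 0 := by
  have h1 : ∀ u : ι → Fin 2, (-1 : ℝ) ^ (wtS u) = ∏ i, (-1 : ℝ) ^ ((u i : ℕ)) := by
    intro u; rw [wtS, Finset.prod_pow_eq_pow_sum]
  calc ∑ u : ι → Fin 2, (-1 : ℝ) ^ (wtS u)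
      = ∑ u : ι → Fin 2, ∏ i, (-1 : ℝ) ^ ((u i : ℕ)) :=
        Finset.sum_congr rfl fun u _ => h1 u
    _ = ∑ u ∈ Fintype.piFinset (fun _ : ι => (Finset.univ : Finset (Fin 2))),
          ∏ i, (-1 : ℝ) ^ ((u i : ℕ)) := by rw [Fintype.piFinset_univ]
    _ = ∏ _i : ι, ∑ b : Fin 2, (-1 : ℝ) ^ ((b : ℕ)) :=
        (Finset.prod_univ_sum (fun _ : ι => (Finset.univ : Finset (Fin 2)))
          (fun _ b => (-1 : ℝ) ^ ((b : ℕ)))).symm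
    _ = 0 := by
        have h2 : ∑ b : Fin 2, (-1 : ℝ) ^ ((b : ℕ)) = 0 := by
          norm_num [Fin.sum_univ_two]
        rw [h2, Finset.prod_const, zero_pow]
        simp [Fintype.card_ne_zero]

lemma wt_split {ι : Type} [Fintype ι] [DecidableEq ι] (P : Finset ι) (x : ι → Fin 2) :
    wtS x = wtS (fun i : { i // i ∈ P } => x i.1)
      + wtS (fun i : { i // i ∉ P } => x i.1) := by
  rw [wtS, wtS, wtS,
    ← Finset.sum_filter_add_sum_filter_not Finset.univ (· ∈ P) (fun i => ((x i : ℕ)))]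
  congr 1
  · exact Finset.sum_subtype _ (by simp) _
  · exact Finset.sum_subtype _ (by simp) _

lemma max_abs (A B : ℝ) : |A| + |B| ≤ max |A + B| |A - B| := by
  rcases le_total 0 A with hA | hA <;> rcases le_total 0 B with hB | hB
  · refine le_max_of_le_left ?_
    rw [abs_of_nonneg hA, abs_of_nonneg hB]; exact le_abs_self _
  · refine le_max_of_le_right ?_
    rw [abs_of_nonneg hA, abs_of_nonpos hB]
    have := le_abs_self (A - B); linarith
  · refine le_max_of_le_right ?_
    rw [abs_of_nonpos hA, abs_of_nonneg hB]
    have := neg_abs_le (A - B); linarith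
  · refine le_max_of_le_left ?_
    rw [abs_of_nonpos hA, abs_of_nonpos hB]
    have := neg_abs_le (A + B); linarith

lemma sum_one {κ : Type} [Fintype κ] [DecidableEq κ] :
    ∑ _u : κ → Fin 2, (1 : ℝ) = 2 ^ Fintype.card κ := by
  rw [Finset.sum_const, Finset.card_univ, Fintype.card_fun]
  simp

lemma coef_bound {κ : Type} [Fintype κ] [DecidableEq κ] [Nonempty κ]
    (f : (κ → Fin 2) → ℝ) (hf : ∀ u, |f u| ≤ 1) (s : ℝ) (hs : s = 1 ∨ s = -1) :
    |∑ u : κ → Fin 2, (1 + s * (-1 : ℝ) ^ (wtS u)) / 2 * sg (wtS u) * f u|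
      ≤ 2 ^ (Fintype.card κ - 1) := by
  have hterm : ∀ u : κ → Fin 2,
      |(1 + s * (-1 : ℝ) ^ (wtS u)) / 2 * sg (wtS u) * f u|
        ≤ (1 + s * (-1 : ℝ) ^ (wtS u)) / 2 := by
    intro u
    have h1 : (0 : ℝ) ≤ (1 + s * (-1 : ℝ) ^ (wtS u)) / 2 := by
      rcases hs with h | h <;>
        rcases Nat.even_or_odd (wtS u) with he | he <;>
          rw [h, he.neg_one_pow] <;> norm_num
    rw [abs_mul, abs_mul, abs_of_nonneg h1, abs_sg, mul_one]
    have := hf u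
    nlinarith [abs_nonneg (f u)]
  have hcard : 1 ≤ Fintype.card κ := Fintype.card_pos
  calc |∑ u : κ → Fin 2, (1 + s * (-1 : ℝ) ^ (wtS u)) / 2 * sg (wtS u) * f u|
      ≤ ∑ u : κ → Fin 2, |(1 + s * (-1 : ℝ) ^ (wtS u)) / 2 * sg (wtS u) * f u| :=
        Finset.abs_sum_le_sum_abs _ _
    _ ≤ ∑ u : κ → Fin 2, (1 + s * (-1 : ℝ) ^ (wtS u)) / 2 :=
        Finset.sum_le_sum fun u _ => hterm u
    _ = ((∑ _u : κ → Fin 2, (1 : ℝ)) + s * ∑ u : κ → Fin 2, (-1 : ℝ) ^ (wtS u)) / 2 := by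
        rw [← Finset.sum_div, Finset.sum_add_distrib, Finset.mul_sum]
    _ = 2 ^ (Fintype.card κ - 1) := by
        rw [parity_sum, sum_one, mul_zero, add_zero]
        have : (2 : ℝ) ^ Fintype.card κ = 2 ^ (Fintype.card κ - 1) * 2 := by
          rw [← pow_succ]; congr 1; omega
        rw [this]; ring

lemma sg_add_sgm_abs (w : ℕ) : |sg w + sgm w| ≤ 1 + (-1 : ℝ) ^ w := by
  rw [sgm_eq]
  rcases Nat.even_or_odd w with h | h
  · rw [h.neg_one_pow, mul_one, ← two_mul, abs_mul, abs_sg]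
    norm_num
  · rw [h.neg_one_pow]; simp

lemma sg_sub_sgm_abs (w : ℕ) : |sg w - sgm w| ≤ 1 - (-1 : ℝ) ^ w := by
  rw [sgm_eq]
  rcases Nat.even_or_odd w with h | h
  · rw [h.neg_one_pow]; simp
  · rw [h.neg_one_pow, mul_neg_one, sub_neg_eq_add, ← two_mul, abs_mul, abs_sg]
    norm_num

lemma g_bound {κ : Type} [Fintype κ] [DecidableEq κ] [Nonempty κ]
    (g : (κ → Fin 2) → ℝ) (hg : ∀ v, |g v| ≤ 1) :
    |∑ v : κ → Fin 2, sg (wtS v) * g v| + |∑ v : κ → Fin 2, sgm (wtS v) * g v|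
      ≤ 2 ^ Fintype.card κ := by
  refine le_trans (max_abs _ _) (max_le ?_ ?_)
  · rw [← Finset.sum_add_distrib]
    calc |∑ v : κ → Fin 2, (sg (wtS v) * g v + sgm (wtS v) * g v)|
        ≤ ∑ v : κ → Fin 2, |(sg (wtS v) + sgm (wtS v)) * g v| := by
          have heq : ∑ v : κ → Fin 2, (sg (wtS v) * g v + sgm (wtS v) * g v)
              = ∑ v : κ → Fin 2, (sg (wtS v) + sgm (wtS v)) * g v :=
            Finset.sum_congr rfl fun v _ => by ring
          rw [heq]; exact Finset.abs_sum_le_sum_abs _ _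
      _ ≤ ∑ v : κ → Fin 2, (1 + (-1 : ℝ) ^ (wtS v)) := by
          refine Finset.sum_le_sum fun v _ => ?_
          rw [abs_mul]
          have h1 := sg_add_sgm_abs (wtS v)
          have h2 := hg v
          nlinarith [abs_nonneg (sg (wtS v) + sgm (wtS v)), abs_nonneg (g v)]
      _ = 2 ^ Fintype.card κ := by
          rw [Finset.sum_add_distrib, parity_sum, sum_one, add_zero]
  · rw [← Finset.sum_sub_distrib]
    calc |∑ v : κ → Fin 2, (sg (wtS v) * g v - sgm (wtS v) * g v)|
        ≤ ∑ v : κ → Fin 2, |(sg (wtS v) - sgm (wtS v)) * g v| := by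
          have heq : ∑ v : κ → Fin 2, (sg (wtS v) * g v - sgm (wtS v) * g v)
              = ∑ v : κ → Fin 2, (sg (wtS v) - sgm (wtS v)) * g v :=
            Finset.sum_congr rfl fun v _ => by ring
          rw [heq]; exact Finset.abs_sum_le_sum_abs _ _
      _ ≤ ∑ v : κ → Fin 2, (1 - (-1 : ℝ) ^ (wtS v)) := by
          refine Finset.sum_le_sum fun v _ => ?_
          rw [abs_mul]
          have h1 := sg_sub_sgm_abs (wtS v)
          have h2 := hg v
          nlinarith [abs_nonneg (sg (wtS v) - sgm (wtS v)), abs_nonneg (g v)]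
      _ = 2 ^ Fintype.card κ := by
          rw [Finset.sum_sub_distrib, parity_sum, sum_one, sub_zero]

lemma key {ι : Type} [Fintype ι] [DecidableEq ι] (P : Finset ι)
    (f : ({ i // i ∈ P } → Fin 2) → ℝ) (g : ({ i // i ∉ P } → Fin 2) → ℝ)
    (hf : ∀ u, |f u| ≤ 1) (hg : ∀ u, |g u| ≤ 1)
    (hne : P.Nonempty) (hpr : P ≠ Finset.univ) :
    |∑ x : ι → Fin 2, sg (wtS x) * (f (fun i => x i.1) * g (fun i => x i.1))|
      ≤ 2 ^ (Fintype.card ι - 1) := by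
  haveI hne1 : Nonempty { i // i ∈ P } := ⟨⟨hne.choose, hne.choose_spec⟩⟩
  haveI hne2 : Nonempty { i // i ∉ P } := by
    obtain ⟨j, hj⟩ : ∃ j, j ∉ P := by
      by_contra h; push_neg at h
      exact hpr (Finset.eq_univ_iff_forall.mpr h)
    exact ⟨⟨j, hj⟩⟩
  set k := Fintype.card { i // i ∈ P } with hk
  set m := Fintype.card { i // i ∉ P } with hm
  have hk1 : 1 ≤ k := Fintype.card_pos
  have hm1 : 1 ≤ m := Fintype.card_pos
  have hkm : k + m = Fintype.card ι := by
    have h1 : m = Fintype.card ι - k := Fintype.card_subtype_compl _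
    have h2 : k ≤ Fintype.card ι := by
      exact Fintype.card_le_of_injective (fun i => i.1) Subtype.val_injective
    omega
  set e := (Equiv.piEquivPiSubtypeProd (fun i => i ∈ P) (fun _ => Fin 2)).symm with he
  have h1 : ∀ (u : { i // i ∈ P } → Fin 2) (v : { i // i ∉ P } → Fin 2),
      (fun i : { i // i ∈ P } => e (u, v) i.1) = u := by
    intro u v; funext i
    simp [he, Equiv.piEquivPiSubtypeProd_symm_apply, i.2]
  have h2 : ∀ (u : { i // i ∈ P } → Fin 2) (v : { i // i ∉ P } → Fin 2),
      (fun i : { i // i ∉ P } => e (u, v) i.1) = v := by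
    intro u v; funext i
    simp [he, Equiv.piEquivPiSubtypeProd_symm_apply, i.2]
  have hwt : ∀ (u : { i // i ∈ P } → Fin 2) (v : { i // i ∉ P } → Fin 2),
      wtS (e (u, v)) = wtS u + wtS v := by
    intro u v
    rw [wt_split P (e (u, v)), h1 u v, h2 u v]
  have hT : (∑ x : ι → Fin 2, sg (wtS x) * (f (fun i => x i.1) * g (fun i => x i.1)))
      = (∑ u : { i // i ∈ P } → Fin 2,
            (1 + (1 : ℝ) * (-1 : ℝ) ^ (wtS u)) / 2 * sg (wtS u) * f u)
          * (∑ v : { i // i ∉ P } → Fin 2, sg (wtS v) * g v)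
        + (∑ u : { i // i ∈ P } → Fin 2,
            (1 + (-1 : ℝ) * (-1 : ℝ) ^ (wtS u)) / 2 * sg (wtS u) * f u)
          * (∑ v : { i // i ∉ P } → Fin 2, sgm (wtS v) * g v) := by
    rw [← Equiv.sum_comp e
      (fun x => sg (wtS x) * (f (fun i => x i.1) * g (fun i => x i.1)))]
    rw [Fintype.sum_prod_type]
    have inner : ∀ u : { i // i ∈ P } → Fin 2,
        (∑ v : { i // i ∉ P } → Fin 2,
          sg (wtS (e (u, v))) * (f (fun i => e (u, v) i.1) * g (fun i => e (u, v) i.1)))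
        = (1 + (1 : ℝ) * (-1 : ℝ) ^ (wtS u)) / 2 * sg (wtS u) * f u
            * (∑ v : { i // i ∉ P } → Fin 2, sg (wtS v) * g v)
          + (1 + (-1 : ℝ) * (-1 : ℝ) ^ (wtS u)) / 2 * sg (wtS u) * f u
            * (∑ v : { i // i ∉ P } → Fin 2, sgm (wtS v) * g v) := by
      intro u
      rw [Finset.mul_sum, Finset.mul_sum, ← Finset.sum_add_distrib]
      refine Finset.sum_congr rfl fun v _ => ?_
      rw [h1 u v, h2 u v, hwt u v, sg_split]
      ring
    calc (∑ u : { i // i ∈ P } → Fin 2, ∑ v : { i // i ∉ P } → Fin 2,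
            sg (wtS (e (u, v))) * (f (fun i => e (u, v) i.1) * g (fun i => e (u, v) i.1)))
        = ∑ u : { i // i ∈ P } → Fin 2,
            ((1 + (1 : ℝ) * (-1 : ℝ) ^ (wtS u)) / 2 * sg (wtS u) * f u
              * (∑ v : { i // i ∉ P } → Fin 2, sg (wtS v) * g v)
            + (1 + (-1 : ℝ) * (-1 : ℝ) ^ (wtS u)) / 2 * sg (wtS u) * f u
              * (∑ v : { i // i ∉ P } → Fin 2, sgm (wtS v) * g v)) :=
          Finset.sum_congr rfl fun u _ => inner u
      _ = _ := by rw [Finset.sum_add_distrib, ← Finset.sum_mul, ← Finset.sum_mul]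
  have hCa := coef_bound f hf 1 (Or.inl rfl)
  have hCb := coef_bound f hf (-1) (Or.inr rfl)
  have hG := g_bound g hg
  rw [hT]
  calc |(∑ u : { i // i ∈ P } → Fin 2,
            (1 + (1 : ℝ) * (-1 : ℝ) ^ (wtS u)) / 2 * sg (wtS u) * f u)
          * (∑ v : { i // i ∉ P } → Fin 2, sg (wtS v) * g v)
        + (∑ u : { i // i ∈ P } → Fin 2,
            (1 + (-1 : ℝ) * (-1 : ℝ) ^ (wtS u)) / 2 * sg (wtS u) * f u)
          * (∑ v : { i // i ∉ P } → Fin 2, sgm (wtS v) * g v)|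
      ≤ |∑ u : { i // i ∈ P } → Fin 2,
            (1 + (1 : ℝ) * (-1 : ℝ) ^ (wtS u)) / 2 * sg (wtS u) * f u|
          * |∑ v : { i // i ∉ P } → Fin 2, sg (wtS v) * g v|
        + |∑ u : { i // i ∈ P } → Fin 2,
            (1 + (-1 : ℝ) * (-1 : ℝ) ^ (wtS u)) / 2 * sg (wtS u) * f u|
          * |∑ v : { i // i ∉ P } → Fin 2, sgm (wtS v) * g v| := by
        refine le_trans (abs_add_le _ _) ?_
        rw [abs_mul, abs_mul]
    _ ≤ 2 ^ (k - 1) * |∑ v : { i // i ∉ P } → Fin 2, sg (wtS v) * g v|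
        + 2 ^ (k - 1) * |∑ v : { i // i ∉ P } → Fin 2, sgm (wtS v) * g v| := by
        gcongr
    _ = 2 ^ (k - 1) * (|∑ v : { i // i ∉ P } → Fin 2, sg (wtS v) * g v|
        + |∑ v : { i // i ∉ P } → Fin 2, sgm (wtS v) * g v|) := by ring
    _ ≤ 2 ^ (k - 1) * 2 ^ m := by
        have h2k : (0:ℝ) ≤ 2 ^ (k - 1) := by positivity
        exact mul_le_mul_of_nonneg_left hG h2k
    _ = 2 ^ (Fintype.card ι - 1) := by
        rw [← pow_add]; congr 1; omega

lemma keym {ι : Type} [Fintype ι] [DecidableEq ι] (P : Finset ι)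
    (f : ({ i // i ∈ P } → Fin 2) → ℝ) (g : ({ i // i ∉ P } → Fin 2) → ℝ)
    (hf : ∀ u, |f u| ≤ 1) (hg : ∀ u, |g u| ≤ 1)
    (hne : P.Nonempty) (hpr : P ≠ Finset.univ) :
    |∑ x : ι → Fin 2, sgm (wtS x) * (f (fun i => x i.1) * g (fun i => x i.1))|
      ≤ 2 ^ (Fintype.card ι - 1) := by
  have hpt : ∀ x : ι → Fin 2,
      sgm (wtS x) * (f (fun i => x i.1) * g (fun i => x i.1))
        = sg (wtS x) * (((-1 : ℝ) ^ (wtS (fun i : { i // i ∈ P } => x i.1))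
              * f (fun i => x i.1))
            * ((-1 : ℝ) ^ (wtS (fun i : { i // i ∉ P } => x i.1))
              * g (fun i => x i.1))) := by
    intro x
    rw [sgm_eq, wt_split P x, pow_add]
    ring
  rw [Finset.sum_congr rfl fun x _ => hpt x]
  exact key P (fun u => (-1 : ℝ) ^ (wtS u) * f u) (fun v => (-1 : ℝ) ^ (wtS v) * g v)
    (fun u => by rw [abs_mul, abs_pow, abs_neg, abs_one, one_pow, one_mul]; exact hf u)
    (fun v => by rw [abs_mul, abs_pow, abs_neg, abs_one, one_pow, one_mul]; exact hg v)
    hne hpr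

end SvetAux

open SvetAux in
/-- Classical (Svetlichny-local) bound: any correlator admitting a hybrid bipartite
decomposition into groups `P_λ` and their complements satisfies
`|S_N^±[c]| ≤ 2^{N-1}`. -/
theorem stmt_6 (N : ℕ) (hN : 2 ≤ N) (c : (Fin N → Fin 2) → ℝ)
    (Λ : Type) [Fintype Λ] (p : Λ → ℝ) (hp : ∀ l, 0 ≤ p l) (hpsum : ∑ l, p l = 1)
    (P : Λ → Finset (Fin N)) (hPne : ∀ l, (P l).Nonempty) (hPproper : ∀ l, P l ≠ Finset.univ)
    (f : (l : Λ) → (({ i // i ∈ P l }) → Fin 2) → ℝ)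
    (g : (l : Λ) → (({ i // i ∉ P l }) → Fin 2) → ℝ)
    (hf : ∀ l u, |f l u| ≤ 1) (hg : ∀ l u, |g l u| ≤ 1)
    (hc : ∀ x : Fin N → Fin 2,
      c x = ∑ l, p l * f l (fun i => x i.1) * g l (fun i => x i.1)) :
    |Splus c| ≤ 2 ^ (N - 1) ∧ |Sminus c| ≤ 2 ^ (N - 1) := by
  have hcardN : Fintype.card (Fin N) = N := Fintype.card_fin N
  constructor
  · have hsum : Splus c = ∑ l, p l * (∑ x : Fin N → Fin 2,
        sg (wtS x) * (f l (fun i => x i.1) * g l (fun i => x i.1))) := by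
      rw [Splus]
      calc ∑ x : Fin N → Fin 2, (-1 : ℝ) ^ (wt x * (wt x + 1) / 2) * c x
          = ∑ x : Fin N → Fin 2, ∑ l,
              p l * (sg (wtS x) * (f l (fun i => x i.1) * g l (fun i => x i.1))) := by
            refine Finset.sum_congr rfl fun x _ => ?_
            rw [hc x, Finset.mul_sum]
            refine Finset.sum_congr rfl fun l _ => ?_
            show sg (wtS x) * (p l * f l _ * g l _) = _
            ring
        _ = ∑ l, ∑ x : Fin N → Fin 2,
              p l * (sg (wtS x) * (f l (fun i => x i.1) * g l (fun i => x i.1))) :=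
            Finset.sum_comm
        _ = _ := Finset.sum_congr rfl fun l _ => (Finset.mul_sum _ _ _).symm
    rw [hsum]
    calc |∑ l, p l * (∑ x : Fin N → Fin 2,
            sg (wtS x) * (f l (fun i => x i.1) * g l (fun i => x i.1)))|
        ≤ ∑ l, |p l * (∑ x : Fin N → Fin 2,
            sg (wtS x) * (f l (fun i => x i.1) * g l (fun i => x i.1)))| :=
          Finset.abs_sum_le_sum_abs _ _
      _ ≤ ∑ l, p l * 2 ^ (N - 1) := by
          refine Finset.sum_le_sum fun l _ => ?_
          rw [abs_mul, abs_of_nonneg (hp l)]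
          refine mul_le_mul_of_nonneg_left ?_ (hp l)
          have := key (P l) (f l) (g l) (hf l) (hg l) (hPne l) (hPproper l)
          rwa [hcardN] at this
      _ = 2 ^ (N - 1) := by rw [← Finset.sum_mul, hpsum, one_mul]
  · have hsum : Sminus c = ∑ l, p l * (∑ x : Fin N → Fin 2,
        sgm (wtS x) * (f l (fun i => x i.1) * g l (fun i => x i.1))) := by
      rw [Sminus]
      calc ∑ x : Fin N → Fin 2, (-1 : ℝ) ^ (wt x * (wt x - 1) / 2) * c x
          = ∑ x : Fin N → Fin 2, ∑ l,
              p l * (sgm (wtS x) * (f l (fun i => x i.1) * g l (fun i => x i.1))) := by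
            refine Finset.sum_congr rfl fun x _ => ?_
            rw [hc x, Finset.mul_sum]
            refine Finset.sum_congr rfl fun l _ => ?_
            show sgm (wtS x) * (p l * f l _ * g l _) = _
            ring
        _ = ∑ l, ∑ x : Fin N → Fin 2,
              p l * (sgm (wtS x) * (f l (fun i => x i.1) * g l (fun i => x i.1))) :=
            Finset.sum_comm
        _ = _ := Finset.sum_congr rfl fun l _ => (Finset.mul_sum _ _ _).symm
    rw [hsum]
    calc |∑ l, p l * (∑ x : Fin N → Fin 2,
            sgm (wtS x) * (f l (fun i => x i.1) * g l (fun i => x i.1)))|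
        ≤ ∑ l, |p l * (∑ x : Fin N → Fin 2,
            sgm (wtS x) * (f l (fun i => x i.1) * g l (fun i => x i.1)))| :=
          Finset.abs_sum_le_sum_abs _ _
      _ ≤ ∑ l, p l * 2 ^ (N - 1) := by
          refine Finset.sum_le_sum fun l _ => ?_
          rw [abs_mul, abs_of_nonneg (hp l)]
          refine mul_le_mul_of_nonneg_left ?_ (hp l)
          have := keym (P l) (f l) (g l) (hf l) (hg l) (hPne l) (hPproper l)
          rwa [hcardN] at this
      _ = 2 ^ (N - 1) := by rw [← Finset.sum_mul, hpsum, one_mul]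
end

section
/- (Sum-of-squares decomposition of the N-partite Svetlichny operator with a dishonest group, eq. (A11)) Let N ≥ 2, 3 ≤ k ≤ N. Let A_0^{(i)}, A_1^{(i)} be binary observables on ℂ^{d_i} for i = 1,…,k−1, and let M_v be a binary observable on ℂ^{d_D} for each v ∈ {0,1}^{N−k+1}. For x = (x_3,…,x_N) ∈ {0,1}^{N−2} write σ_x = (−1)^{w(x)(w(x)+1)/2} and T_x = A_{x_3}^{(3)} ⊗ … ⊗ A_{x_{k−1}}^{(k−1)} ⊗ M_{(x_k,…,x_N)}. Then 2^{N−1}√2·I − Ŝ_N^+ = (1/√2) Σ_{x: w(x) odd} [(I − σ_x ((A_0^{(1)}+A_1^{(1)})/√2) ⊗ A_0^{(2)} ⊗ T_x)² + (I − σ_x ((A_0^{(1)}−A_1^{(1)})/√2) ⊗ A_1^{(2)} ⊗ T_x)²] + (1/√2) Σ_{x: w(x) even} [(I − σ_x ((A_0^{(1)}−A_1^{(1)})/√2) ⊗ A_0^{(2)} ⊗ T_x)² + (I + σ_x ((A_0^{(1)}+A_1^{(1)})/√2) ⊗ A_1^{(2)} ⊗ T_x)²]. -/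
open Matrix

noncomputable section

/-- The Svetlichny sign `(-1)^{w(x)(w(x)+1)/2}`. -/
def sgn {n : ℕ} (x : Fin n → Fin 2) : ℂ := (-1) ^ (wt x * (wt x + 1) / 2)

/-- The joint Hilbert-space index of `t+2` honest parties (local dimensions `d i`) and the
grouped dishonest parties (dimension `dD`). -/
abbrev FullIdx (t : ℕ) (d : Fin (t + 2) → ℕ) (dD : ℕ) :=
  ((i : Fin (t + 2)) → Fin (d i)) × Fin dD

/-- The tensor-product observable
`A^{(1)}_{x_1} ⊗ ⋯ ⊗ A^{(k-1)}_{x_{k-1}} ⊗ M_{(x_k,…,x_N)}`, written entrywise.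
Here the `k - 1 = t + 2` honest parties have binary observables `A i b`, and the grouped
dishonest parties have joint binary observables `M v` for `v ∈ {0,1}^{N-k+1}`, `N-k+1 = s+1`. -/
def bigOp {t s : ℕ} {d : Fin (t + 2) → ℕ} {dD : ℕ}
    (A : (i : Fin (t + 2)) → Fin 2 → Matrix (Fin (d i)) (Fin (d i)) ℂ)
    (M : (Fin (s + 1) → Fin 2) → Matrix (Fin dD) (Fin dD) ℂ)
    (x : Fin (t + 2 + (s + 1)) → Fin 2) :
    Matrix (FullIdx t d dD) (FullIdx t d dD) ℂ :=
  Matrix.of fun p q =>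
    (∏ i, A i (x (Fin.castAdd (s + 1) i)) (p.1 i) (q.1 i)) *
      M (fun j => x (Fin.natAdd (t + 2) j)) p.2 q.2

/-- The Svetlichny–Bell operator `Ŝ_N^+` with a grouped dishonest set
(`N = (t+2) + (s+1)`). -/
def svetOp {t s : ℕ} {d : Fin (t + 2) → ℕ} {dD : ℕ}
    (A : (i : Fin (t + 2)) → Fin 2 → Matrix (Fin (d i)) (Fin (d i)) ℂ)
    (M : (Fin (s + 1) → Fin 2) → Matrix (Fin dD) (Fin dD) ℂ) :
    Matrix (FullIdx t d dD) (FullIdx t d dD) ℂ :=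
  ∑ x : Fin (t + 2 + (s + 1)) → Fin 2, sgn x • bigOp A M x

/-- The tensor-product operator `P1 ⊗ A^{(2)}_{b2} ⊗ T_x`, where
`T_x = A^{(3)}_{x_3} ⊗ ⋯ ⊗ A^{(k-1)}_{x_{k-1}} ⊗ M_{(x_k,…,x_N)}` and
`x ∈ {0,1}^{N-2}` collects the inputs of parties `3,…,N`. -/
def tailOp {t s : ℕ} {d : Fin (t + 2) → ℕ} {dD : ℕ}
    (A : (i : Fin (t + 2)) → Fin 2 → Matrix (Fin (d i)) (Fin (d i)) ℂ)
    (M : (Fin (s + 1) → Fin 2) → Matrix (Fin dD) (Fin dD) ℂ)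
    (P1 : Matrix (Fin (d 0)) (Fin (d 0)) ℂ) (b2 : Fin 2)
    (x : Fin (t + (s + 1)) → Fin 2) :
    Matrix (FullIdx t d dD) (FullIdx t d dD) ℂ :=
  Matrix.of fun p q =>
    P1 (p.1 0) (q.1 0) * A 1 b2 (p.1 1) (q.1 1) *
      (∏ i : Fin t,
        A i.succ.succ (x (Fin.castAdd (s + 1) i)) (p.1 i.succ.succ) (q.1 i.succ.succ)) *
      M (fun j => x (Fin.natAdd t j)) p.2 q.2

namespace SvetAux

variable {t s : ℕ} {d : Fin (t + 2) → ℕ} {dD : ℕ}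
  (A : (i : Fin (t + 2)) → Fin 2 → Matrix (Fin (d i)) (Fin (d i)) ℂ)
  (M : (Fin (s + 1) → Fin 2) → Matrix (Fin dD) (Fin dD) ℂ)

/-! ### Index gluing -/

def glue (b1 b2 : Fin 2) (x : Fin (t + (s+1)) → Fin 2) : Fin (t + 2 + (s + 1)) → Fin 2 :=
  fun j => (Fin.cons b1 (Fin.cons b2 x) : Fin (t+(s+1)+1+1) → Fin 2) (Fin.cast (by omega) j)

section glue
variable (b1 b2 : Fin 2) (x : Fin (t + (s+1)) → Fin 2)

lemma glue_mk_two (v : ℕ) (h : v+2 < t+2+(s+1)) (h2 : v < t+(s+1)) :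
    glue b1 b2 x ⟨v+2,h⟩ = x ⟨v,h2⟩ := rfl

lemma glue_natAdd (j : Fin (s+1)) :
    glue b1 b2 x (Fin.natAdd (t+2) j) = x (Fin.natAdd t j) := by
  have h1 : Fin.natAdd (t+2) j = (⟨t + (j:ℕ) + 2, by omega⟩ : Fin (t+2+(s+1))) := by
    ext; simp; omega
  have h2 : Fin.natAdd t j = (⟨t + (j:ℕ), by omega⟩ : Fin (t+(s+1))) := rfl
  rw [h1, h2, glue_mk_two]

lemma wt_glue : wt (glue b1 b2 x) = (b1:ℕ) + (b2:ℕ) + wt x := by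
  unfold wt glue
  have h : t+2+(s+1) = t+(s+1)+1+1 := by omega
  have e := Fintype.sum_equiv (finCongr h)
    (fun j : Fin (t+2+(s+1)) =>
      (((Fin.cons b1 (Fin.cons b2 x) : Fin (t+(s+1)+1+1) → Fin 2) (Fin.cast h j)) : ℕ))
    (fun j : Fin (t+(s+1)+1+1) =>
      (((Fin.cons b1 (Fin.cons b2 x) : Fin (t+(s+1)+1+1) → Fin 2) j) : ℕ))
    (fun i => rfl)
  rw [e, Fin.sum_univ_succ, Fin.sum_univ_succ]
  simp [add_assoc]

end glue

def glueEquiv : (Fin 2 × Fin 2 × (Fin (t + (s+1)) → Fin 2)) ≃ (Fin (t + 2 + (s + 1)) → Fin 2) where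
  toFun p := glue p.1 p.2.1 p.2.2
  invFun y := (y ⟨0, by omega⟩, y ⟨1, by omega⟩, fun j => y ⟨(j:ℕ)+2, by omega⟩)
  left_inv := fun ⟨b1, b2, x⟩ => by
    simp only [Prod.mk.injEq]
    exact ⟨rfl, rfl, funext fun j => rfl⟩
  right_inv y := by
    funext j
    obtain ⟨v, hv⟩ := j
    rcases v with _ | _ | v <;> rfl

/-! ### Sign lemmas -/

def sN (m : ℕ) : ℂ := (-1) ^ (m*(m+1)/2)

lemma sgn_eq_sN {n : ℕ} (y : Fin n → Fin 2) : sgn y = sN (wt y) := rfl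

lemma sN_succ (m : ℕ) : sN (m+1) = (-1)^(m+1) * sN m := by
  unfold sN
  obtain ⟨c, hc⟩ := Nat.even_mul_succ_self m
  have h1 : m*(m+1)/2 = c := by omega
  have h2 : (m+1)*(m+1+1) = m*(m+1) + 2*(m+1) := by ring
  have h3 : (m+1)*(m+1+1)/2 = c + (m+1) := by omega
  rw [h1, h3, pow_add, mul_comm]

lemma sN_two (m : ℕ) : sN (m+2) = - sN m := by
  have key : (-1:ℂ)^(m+1+1) * (-1)^(m+1) = -1 := by
    rw [← pow_add]
    exact Odd.neg_one_pow ⟨m+1, by ring⟩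
  rw [show m+2 = m+1+1 from rfl, sN_succ, sN_succ, ← mul_assoc, key, neg_one_mul]

lemma sN_succ_odd {m : ℕ} (h : Odd m) : sN (m+1) = sN m := by
  rw [sN_succ, Even.neg_one_pow (by exact Odd.add_one h), one_mul]

lemma sN_succ_even {m : ℕ} (h : Even m) : sN (m+1) = - sN m := by
  rw [sN_succ, Odd.neg_one_pow (by exact Even.add_one h), neg_one_mul]

lemma sgn_mul_self {n : ℕ} (y : Fin n → Fin 2) : sgn y * sgn y = 1 := by
  unfold sgn
  rw [← pow_add, ← two_mul, pow_mul]
  norm_num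

section sgnglue
variable (x : Fin (t + (s+1)) → Fin 2)

lemma sgn_glue00 : sgn (glue 0 0 x) = sgn x := by
  rw [sgn_eq_sN, wt_glue, sgn_eq_sN]
  norm_num

lemma sgn_glue11 : sgn (glue 1 1 x) = - sgn x := by
  rw [sgn_eq_sN, wt_glue, sgn_eq_sN]
  have : ((1:Fin 2):ℕ) + ((1:Fin 2):ℕ) + wt x = wt x + 2 := by simp; ring
  rw [this, sN_two]

lemma sgn_glue10_odd (h : Odd (wt x)) : sgn (glue 1 0 x) = sgn x := by
  rw [sgn_eq_sN, wt_glue, sgn_eq_sN]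
  have : ((1:Fin 2):ℕ) + ((0:Fin 2):ℕ) + wt x = wt x + 1 := by simp; ring
  rw [this, sN_succ_odd h]

lemma sgn_glue01_odd (h : Odd (wt x)) : sgn (glue 0 1 x) = sgn x := by
  rw [sgn_eq_sN, wt_glue, sgn_eq_sN]
  have : ((0:Fin 2):ℕ) + ((1:Fin 2):ℕ) + wt x = wt x + 1 := by simp; ring
  rw [this, sN_succ_odd h]

lemma sgn_glue10_even (h : Even (wt x)) : sgn (glue 1 0 x) = - sgn x := by
  rw [sgn_eq_sN, wt_glue, sgn_eq_sN]
  have : ((1:Fin 2):ℕ) + ((0:Fin 2):ℕ) + wt x = wt x + 1 := by simp; ring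
  rw [this, sN_succ_even h]

lemma sgn_glue01_even (h : Even (wt x)) : sgn (glue 0 1 x) = - sgn x := by
  rw [sgn_eq_sN, wt_glue, sgn_eq_sN]
  have : ((0:Fin 2):ℕ) + ((1:Fin 2):ℕ) + wt x = wt x + 1 := by simp; ring
  rw [this, sN_succ_even h]

end sgnglue

/-! ### Product structure -/

lemma prodTwo {β : Type*} [CommMonoid β] {n : ℕ} (f : Fin (n+2) → β) :
    ∏ i, f i = f 0 * f 1 * ∏ i : Fin n, f i.succ.succ := by
  rw [Fin.prod_univ_succ, Fin.prod_univ_succ, ← mul_assoc]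
  rfl

def lift (P : Matrix (Fin (d 0)) (Fin (d 0)) ℂ) : Matrix (FullIdx t d dD) (FullIdx t d dD) ℂ :=
  Matrix.of fun p q => P (p.1 0) (q.1 0) *
    (∏ i : Fin (t+1), (1 : Matrix (Fin (d i.succ)) (Fin (d i.succ)) ℂ) (p.1 i.succ) (q.1 i.succ)) *
    (1 : Matrix (Fin dD) (Fin dD) ℂ) p.2 q.2

lemma lift_one : lift (d := d) (dD := dD) (1 : Matrix (Fin (d 0)) (Fin (d 0)) ℂ) = 1 := by
  ext ⟨p1, p2⟩ ⟨q1, q2⟩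
  simp only [lift, Matrix.of_apply, Matrix.one_apply]
  rw [Finset.prod_boole]
  by_cases hp : p1 = q1
  · by_cases h2 : p2 = q2
    · simp [hp, h2, Prod.ext_iff]
    · simp [hp, h2, Prod.ext_iff]
  · by_cases ha : p1 0 = q1 0
    · have hforall : ¬ ∀ i ∈ (Finset.univ : Finset (Fin (t+1))), p1 i.succ = q1 i.succ :=
        fun hall => hp (funext (Fin.cases ha fun i => hall i (Finset.mem_univ i)))
      simp only [Prod.ext_iff, hp]
      simp [hforall]
      intro _ hall
      exact absurd (funext (Fin.cases ha hall)) hp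
    · simp [ha, Prod.ext_iff, hp]

lemma lift_add (P Q : Matrix (Fin (d 0)) (Fin (d 0)) ℂ) :
    lift (d := d) (dD := dD) (P + Q) = lift P + lift Q := by
  ext ⟨p1, p2⟩ ⟨q1, q2⟩
  simp only [lift, Matrix.of_apply, Matrix.add_apply]
  ring

lemma lift_smul (a : ℂ) (P : Matrix (Fin (d 0)) (Fin (d 0)) ℂ) :
    lift (d := d) (dD := dD) (a • P) = a • lift P := by
  ext ⟨p1, p2⟩ ⟨q1, q2⟩
  simp only [lift, Matrix.of_apply, Matrix.smul_apply, smul_eq_mul]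
  ring

lemma lift_sub (P Q : Matrix (Fin (d 0)) (Fin (d 0)) ℂ) :
    lift (d := d) (dD := dD) (P - Q) = lift P - lift Q := by
  ext ⟨p1, p2⟩ ⟨q1, q2⟩
  simp only [lift, Matrix.of_apply, Matrix.sub_apply]
  ring

/-! ### tailOp lemmas -/

lemma tailOp_smul (a : ℂ) (P : Matrix (Fin (d 0)) (Fin (d 0)) ℂ) (b : Fin 2)
    (x : Fin (t + (s + 1)) → Fin 2) :
    tailOp A M (a • P) b x = a • tailOp A M P b x := by
  ext p q
  simp only [tailOp, Matrix.of_apply, Matrix.smul_apply, smul_eq_mul]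
  ring

lemma tailOp_add (P Q : Matrix (Fin (d 0)) (Fin (d 0)) ℂ) (b : Fin 2)
    (x : Fin (t + (s + 1)) → Fin 2) :
    tailOp A M (P + Q) b x = tailOp A M P b x + tailOp A M Q b x := by
  ext p q
  simp only [tailOp, Matrix.of_apply, Matrix.add_apply]
  ring

lemma tailOp_sub (P Q : Matrix (Fin (d 0)) (Fin (d 0)) ℂ) (b : Fin 2)
    (x : Fin (t + (s + 1)) → Fin 2) :
    tailOp A M (P - Q) b x = tailOp A M P b x - tailOp A M Q b x := by
  ext p q
  simp only [tailOp, Matrix.of_apply, Matrix.sub_apply]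
  ring

lemma tail_mul (hAsq : ∀ i b, A i b * A i b = 1) (hMsq : ∀ v, M v * M v = 1)
    (P Q : Matrix (Fin (d 0)) (Fin (d 0)) ℂ) (b : Fin 2) (x : Fin (t + (s + 1)) → Fin 2) :
    tailOp A M P b x * tailOp A M Q b x = lift (P * Q) := by
  ext ⟨p1, p2⟩ ⟨q1, q2⟩
  rw [Matrix.mul_apply, Fintype.sum_prod_type]
  simp only [tailOp, Matrix.of_apply]
  set W : (i : Fin (t+2)) → Fin (d i) → ℂ :=
    Fin.cons (fun c => P (p1 0) c * Q c (q1 0))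
      (Fin.cons (fun c => A 1 b (p1 1) c * A 1 b c (q1 1))
        (fun (i : Fin t) c => A i.succ.succ (x (Fin.castAdd (s+1) i)) (p1 i.succ.succ) c *
          A i.succ.succ (x (Fin.castAdd (s+1) i)) c (q1 i.succ.succ))) with hWdef
  have e0 : W 0 = fun c => P (p1 0) c * Q c (q1 0) := rfl
  have e1 : W 1 = fun c => A 1 b (p1 1) c * A 1 b c (q1 1) := rfl
  have e2 : ∀ i : Fin t, W i.succ.succ = fun c =>
      A i.succ.succ (x (Fin.castAdd (s+1) i)) (p1 i.succ.succ) c *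
        A i.succ.succ (x (Fin.castAdd (s+1) i)) c (q1 i.succ.succ) := fun i => rfl
  have step1 : ∀ r1 : (i : Fin (t+2)) → Fin (d i),
      (∑ r2 : Fin dD,
        (P (p1 0) (r1 0) * A 1 b (p1 1) (r1 1) *
          (∏ i : Fin t, A i.succ.succ (x (Fin.castAdd (s+1) i)) (p1 i.succ.succ) (r1 i.succ.succ)) *
          M (fun j => x (Fin.natAdd t j)) p2 r2) *
        (Q (r1 0) (q1 0) * A 1 b (r1 1) (q1 1) *
          (∏ i : Fin t, A i.succ.succ (x (Fin.castAdd (s+1) i)) (r1 i.succ.succ) (q1 i.succ.succ)) *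
          M (fun j => x (Fin.natAdd t j)) r2 q2)) =
      (∏ i : Fin (t+2), W i (r1 i)) * (1 : Matrix (Fin dD) (Fin dD) ℂ) p2 q2 := by
    intro r1
    rw [← hMsq (fun j => x (Fin.natAdd t j)), Matrix.mul_apply, Finset.mul_sum, prodTwo]
    simp only [e0, e1, e2]
    rw [Finset.prod_mul_distrib]
    exact Finset.sum_congr rfl fun r2 _ => by ring
  rw [Finset.sum_congr rfl fun r1 _ => step1 r1, ← Finset.sum_mul]
  have piuniv : (Finset.univ : Finset ((i : Fin (t+2)) → Fin (d i))) =
      Fintype.piFinset (fun _ => Finset.univ) := (Fintype.piFinset_univ).symm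
  rw [piuniv, ← Finset.prod_univ_sum, prodTwo]
  simp only [e0, e1, e2]
  have hs0 : ∑ c : Fin (d 0), P (p1 0) c * Q c (q1 0) = (P * Q) (p1 0) (q1 0) :=
    (Matrix.mul_apply).symm
  have hs1 : ∑ c : Fin (d 1), A 1 b (p1 1) c * A 1 b c (q1 1) =
      (1 : Matrix (Fin (d 1)) (Fin (d 1)) ℂ) (p1 1) (q1 1) := by
    rw [← hAsq 1 b]; exact (Matrix.mul_apply).symm
  have hs2 : ∀ i : Fin t, (∑ c : Fin (d i.succ.succ),
      A i.succ.succ (x (Fin.castAdd (s+1) i)) (p1 i.succ.succ) c *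
        A i.succ.succ (x (Fin.castAdd (s+1) i)) c (q1 i.succ.succ)) =
      (1 : Matrix (Fin (d i.succ.succ)) (Fin (d i.succ.succ)) ℂ) (p1 i.succ.succ) (q1 i.succ.succ) := by
    intro i
    rw [← hAsq i.succ.succ (x (Fin.castAdd (s+1) i))]; exact (Matrix.mul_apply).symm
  rw [hs0, hs1]
  rw [Finset.prod_congr rfl fun i _ => hs2 i]
  have hlift : lift (d:=d) (dD:=dD) (P*Q) (p1,p2) (q1,q2) =
      (P * Q) (p1 0) (q1 0) *
        ((1 : Matrix (Fin (d 1)) (Fin (d 1)) ℂ) (p1 1) (q1 1) *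
          ∏ i : Fin t, (1 : Matrix (Fin (d i.succ.succ)) (Fin (d i.succ.succ)) ℂ)
            (p1 i.succ.succ) (q1 i.succ.succ)) *
        (1 : Matrix (Fin dD) (Fin dD) ℂ) p2 q2 := by
    simp only [lift, Matrix.of_apply]
    rw [Fin.prod_univ_succ]
    rfl
  rw [hlift]
  ring

/-! ### bigOp on glued strings -/

lemma bigOp_glue (b1 b2 : Fin 2) (x : Fin (t + (s+1)) → Fin 2) :
    bigOp A M (glue b1 b2 x) = tailOp A M (A 0 b1) b2 x := by
  ext p q
  simp only [bigOp, tailOp, Matrix.of_apply]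
  rw [prodTwo]
  rw [show (fun j => glue b1 b2 x (Fin.natAdd (t+2) j)) = (fun j => x (Fin.natAdd t j)) from
    funext fun j => glue_natAdd b1 b2 x j]
  rfl

lemma svet_expand :
    svetOp A M = ∑ x : Fin (t + (s+1)) → Fin 2, ∑ b1 : Fin 2, ∑ b2 : Fin 2,
      sgn (glue b1 b2 x) • tailOp A M (A 0 b1) b2 x := by
  rw [svetOp, ← Equiv.sum_comp (glueEquiv (t := t) (s := s))
    (fun y => sgn y • bigOp A M y), Fintype.sum_prod_type]
  simp only [glueEquiv, Equiv.coe_fn_mk]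
  have h1 : ∀ b1 : Fin 2,
      (∑ z : Fin 2 × (Fin (t + (s+1)) → Fin 2),
        sgn (glue b1 z.1 z.2) • bigOp A M (glue b1 z.1 z.2)) =
      ∑ x : Fin (t + (s+1)) → Fin 2, ∑ b2 : Fin 2,
        sgn (glue b1 b2 x) • bigOp A M (glue b1 b2 x) := by
    intro b1
    rw [Fintype.sum_prod_type, Finset.sum_comm]
  rw [Finset.sum_congr rfl fun b1 _ => h1 b1, Finset.sum_comm]
  refine Finset.sum_congr rfl fun x _ => Finset.sum_congr rfl fun b1 _ =>
    Finset.sum_congr rfl fun b2 _ => ?_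
  rw [bigOp_glue]

end SvetAux

open SvetAux


open SvetAux in
/-- Sum-of-squares decomposition of the `N`-partite Svetlichny operator with a dishonest
group (eq. (A11)); here `N = (t+2) + (s+1)` with `k - 1 = t + 2 ≥ 2` honest parties
(so `3 ≤ k ≤ N`) and dishonest input strings of length `N - k + 1 = s + 1`. -/
theorem stmt_8 (t s : ℕ) (d : Fin (t + 2) → ℕ) (dD : ℕ)
    (A : (i : Fin (t + 2)) → Fin 2 → Matrix (Fin (d i)) (Fin (d i)) ℂ)
    (M : (Fin (s + 1) → Fin 2) → Matrix (Fin dD) (Fin dD) ℂ)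
    (hAherm : ∀ i b, (A i b).IsHermitian) (hAsq : ∀ i b, A i b * A i b = 1)
    (hMherm : ∀ v, (M v).IsHermitian) (hMsq : ∀ v, M v * M v = 1) :
    ((2 ^ (t + s + 2) * Real.sqrt 2 : ℝ) : ℂ) •
        (1 : Matrix (FullIdx t d dD) (FullIdx t d dD) ℂ) - svetOp A M =
      ((Real.sqrt 2 : ℂ))⁻¹ •
        ((∑ x ∈ Finset.univ.filter (fun x : Fin (t + (s + 1)) → Fin 2 => Odd (wt x)),
            ((1 - sgn x • tailOp A M (((Real.sqrt 2 : ℂ))⁻¹ • (A 0 0 + A 0 1)) 0 x) ^ 2 +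
              (1 - sgn x • tailOp A M (((Real.sqrt 2 : ℂ))⁻¹ • (A 0 0 - A 0 1)) 1 x) ^ 2)) +
          ∑ x ∈ Finset.univ.filter (fun x : Fin (t + (s + 1)) → Fin 2 => Even (wt x)),
            ((1 - sgn x • tailOp A M (((Real.sqrt 2 : ℂ))⁻¹ • (A 0 0 - A 0 1)) 0 x) ^ 2 +
              (1 + sgn x • tailOp A M (((Real.sqrt 2 : ℂ))⁻¹ • (A 0 0 + A 0 1)) 1 x) ^ 2)) := by
  classical
  have hrt2 : ((Real.sqrt 2 : ℝ) : ℂ) * ((Real.sqrt 2 : ℝ) : ℂ) = 2 := by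
    norm_cast
    rw [Real.mul_self_sqrt (by norm_num : (0:ℝ) ≤ 2)]
  have hrtne : ((Real.sqrt 2 : ℝ) : ℂ) ≠ 0 :=
    Complex.ofReal_ne_zero.mpr (by positivity)
  -- square expansion helpers
  have sqexp_sub : ∀ S L : Matrix (FullIdx t d dD) (FullIdx t d dD) ℂ, S * S = L →
      (1 - S)^2 = 1 - S - S + L := by
    intro S L h; rw [sq, ← h]; noncomm_ring
  have sqexp_add : ∀ S L : Matrix (FullIdx t d dD) (FullIdx t d dD) ℂ, S * S = L →
      (1 + S)^2 = 1 + S + S + L := by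
    intro S L h; rw [sq, ← h]; noncomm_ring
  have hXp : (((Real.sqrt 2:ℝ):ℂ))⁻¹ • (A 0 0 + A 0 1) * ((((Real.sqrt 2:ℝ):ℂ))⁻¹ • (A 0 0 + A 0 1))
      = ((((Real.sqrt 2:ℝ):ℂ))⁻¹ * (((Real.sqrt 2:ℝ):ℂ))⁻¹) •
        ((1:Matrix (Fin (d 0)) (Fin (d 0)) ℂ) + 1 + (A 0 0 * A 0 1 + A 0 1 * A 0 0)) := by
    rw [smul_mul_assoc, mul_smul_comm, smul_smul]
    congr 1
    have h : (A 0 0 + A 0 1) * (A 0 0 + A 0 1)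
        = A 0 0 * A 0 0 + A 0 1 * A 0 1 + (A 0 0 * A 0 1 + A 0 1 * A 0 0) := by noncomm_ring
    rw [h, hAsq 0 0, hAsq 0 1]
  have hXm : (((Real.sqrt 2:ℝ):ℂ))⁻¹ • (A 0 0 - A 0 1) * ((((Real.sqrt 2:ℝ):ℂ))⁻¹ • (A 0 0 - A 0 1))
      = ((((Real.sqrt 2:ℝ):ℂ))⁻¹ * (((Real.sqrt 2:ℝ):ℂ))⁻¹) •
        ((1:Matrix (Fin (d 0)) (Fin (d 0)) ℂ) + 1 - (A 0 0 * A 0 1 + A 0 1 * A 0 0)) := by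
    rw [smul_mul_assoc, mul_smul_comm, smul_smul]
    congr 1
    have h : (A 0 0 - A 0 1) * (A 0 0 - A 0 1)
        = A 0 0 * A 0 0 + A 0 1 * A 0 1 - (A 0 0 * A 0 1 + A 0 1 * A 0 0) := by noncomm_ring
    rw [h, hAsq 0 0, hAsq 0 1]
  have mulSS : ∀ (P : Matrix (Fin (d 0)) (Fin (d 0)) ℂ) (b : Fin 2) (x : Fin (t+(s+1)) → Fin 2),
      (sgn x • tailOp A M P b x) * (sgn x • tailOp A M P b x) = lift (P * P) := by
    intro P b x
    rw [smul_mul_assoc, mul_smul_comm, smul_smul, sgn_mul_self, one_smul,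
      tail_mul A M hAsq hMsq]
  have hL1 : lift (d:=d) (dD:=dD)
      ((1:Matrix (Fin (d 0)) (Fin (d 0)) ℂ) + 1 + (A 0 0 * A 0 1 + A 0 1 * A 0 0))
      = 1 + 1 + lift (A 0 0 * A 0 1 + A 0 1 * A 0 0) := by
    rw [lift_add, lift_add, lift_one]
  have hL2 : lift (d:=d) (dD:=dD)
      ((1:Matrix (Fin (d 0)) (Fin (d 0)) ℂ) + 1 - (A 0 0 * A 0 1 + A 0 1 * A 0 0))
      = 1 + 1 - lift (A 0 0 * A 0 1 + A 0 1 * A 0 0) := by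
    rw [lift_sub, lift_add, lift_one]
  -- per-x identities
  have per_odd : ∀ x : Fin (t+(s+1)) → Fin 2, Odd (wt x) →
      ((2:ℂ) * ((Real.sqrt 2:ℝ):ℂ)) • (1 : Matrix (FullIdx t d dD) (FullIdx t d dD) ℂ)
        - (∑ b1 : Fin 2, ∑ b2 : Fin 2, sgn (glue b1 b2 x) • tailOp A M (A 0 b1) b2 x)
      = ((Real.sqrt 2 : ℂ))⁻¹ •
          ((1 - sgn x • tailOp A M (((Real.sqrt 2 : ℂ))⁻¹ • (A 0 0 + A 0 1)) 0 x) ^ 2 +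
            (1 - sgn x • tailOp A M (((Real.sqrt 2 : ℂ))⁻¹ • (A 0 0 - A 0 1)) 1 x) ^ 2) := by
    intro x hodd
    simp only [Fin.sum_univ_two]
    rw [sgn_glue00, sgn_glue01_odd x hodd, sgn_glue10_odd x hodd, sgn_glue11]
    rw [sqexp_sub _ _ (mulSS _ 0 x), sqexp_sub _ _ (mulSS _ 1 x)]
    rw [hXp, hXm, lift_smul, lift_smul, hL1, hL2]
    rw [tailOp_smul, tailOp_smul, tailOp_add A M (A 0 0) (A 0 1), tailOp_sub A M (A 0 0) (A 0 1)]
    match_scalars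
    all_goals field_simp
    all_goals first
      | linear_combination (-(sgn x * ((Real.sqrt 2:ℝ):ℂ))) * hrt2
      | linear_combination (sgn x * ((Real.sqrt 2:ℝ):ℂ)) * hrt2
      | linear_combination ((2:ℂ) * ((Real.sqrt 2:ℝ):ℂ)^2 + 2) * hrt2
      | linear_combination (sgn x) * hrt2
      | linear_combination (-(sgn x)) * hrt2
      | linear_combination hrt2
      | ring
  have per_even : ∀ x : Fin (t+(s+1)) → Fin 2, Even (wt x) →
      ((2:ℂ) * ((Real.sqrt 2:ℝ):ℂ)) • (1 : Matrix (FullIdx t d dD) (FullIdx t d dD) ℂ)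
        - (∑ b1 : Fin 2, ∑ b2 : Fin 2, sgn (glue b1 b2 x) • tailOp A M (A 0 b1) b2 x)
      = ((Real.sqrt 2 : ℂ))⁻¹ •
          ((1 - sgn x • tailOp A M (((Real.sqrt 2 : ℂ))⁻¹ • (A 0 0 - A 0 1)) 0 x) ^ 2 +
            (1 + sgn x • tailOp A M (((Real.sqrt 2 : ℂ))⁻¹ • (A 0 0 + A 0 1)) 1 x) ^ 2) := by
    intro x heven
    simp only [Fin.sum_univ_two]
    rw [sgn_glue00, sgn_glue01_even x heven, sgn_glue10_even x heven, sgn_glue11]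
    rw [sqexp_sub _ _ (mulSS _ 0 x), sqexp_add _ _ (mulSS _ 1 x)]
    rw [hXm, hXp, lift_smul, lift_smul, hL1, hL2]
    rw [tailOp_smul, tailOp_smul, tailOp_add A M (A 0 0) (A 0 1), tailOp_sub A M (A 0 0) (A 0 1)]
    match_scalars
    all_goals field_simp
    all_goals first
      | linear_combination (-(sgn x * ((Real.sqrt 2:ℝ):ℂ))) * hrt2
      | linear_combination (sgn x * ((Real.sqrt 2:ℝ):ℂ)) * hrt2
      | linear_combination ((2:ℂ) * ((Real.sqrt 2:ℝ):ℂ)^2 + 2) * hrt2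
      | linear_combination (sgn x) * hrt2
      | linear_combination (-(sgn x)) * hrt2
      | linear_combination hrt2
      | ring
  -- assemble
  have hfilter : (Finset.univ.filter (fun x : Fin (t+(s+1)) → Fin 2 => ¬ Odd (wt x)))
      = Finset.univ.filter (fun x => Even (wt x)) := by
    exact Finset.filter_congr fun x _ => Nat.not_odd_iff_even
  have hconst : ((2 ^ (t + s + 2) * Real.sqrt 2 : ℝ) : ℂ) •
        (1 : Matrix (FullIdx t d dD) (FullIdx t d dD) ℂ)
      = (∑ _x ∈ Finset.univ.filter (fun x : Fin (t+(s+1)) → Fin 2 => Odd (wt x)),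
          ((2:ℂ) * ((Real.sqrt 2:ℝ):ℂ)) • (1 : Matrix (FullIdx t d dD) (FullIdx t d dD) ℂ))
        + ∑ _x ∈ Finset.univ.filter (fun x : Fin (t+(s+1)) → Fin 2 => Even (wt x)),
          ((2:ℂ) * ((Real.sqrt 2:ℝ):ℂ)) • (1 : Matrix (FullIdx t d dD) (FullIdx t d dD) ℂ) := by
    rw [← hfilter, Finset.sum_filter_add_sum_filter_not, Finset.sum_const, Finset.card_univ]
    have hcard : Fintype.card (Fin (t+(s+1)) → Fin 2) = 2^(t+(s+1)) := by
      simp [Fintype.card_fun]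
    rw [hcard, ← Nat.cast_smul_eq_nsmul ℂ, smul_smul]
    congr 1
    push_cast
    rw [show t+s+2 = (t+(s+1))+1 by omega, pow_succ]
    ring
  rw [svet_expand A M, ← Finset.sum_filter_add_sum_filter_not Finset.univ
    (fun x : Fin (t+(s+1)) → Fin 2 => Odd (wt x)), hfilter, hconst]
  rw [smul_add, Finset.smul_sum, Finset.smul_sum]
  have rearr : ∀ Sa Sb Ha Hb : Matrix (FullIdx t d dD) (FullIdx t d dD) ℂ,
      Sa + Sb - (Ha + Hb) = (Sa - Ha) + (Sb - Hb) := fun _ _ _ _ => by abel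
  rw [rearr, ← Finset.sum_sub_distrib, ← Finset.sum_sub_distrib]
  congr 1
  · exact Finset.sum_congr rfl fun x hx => per_odd x (Finset.mem_filter.mp hx).2
  · exact Finset.sum_congr rfl fun x hx => per_even x (Finset.mem_filter.mp hx).2
end
end

section
/- (Maximal violation implies the eigenvector conditions (A12)–(A15)) Let N ≥ 2, 3 ≤ k ≤ N, let A_0^{(i)}, A_1^{(i)} be binary observables on ℂ^{d_i} (i = 1,…,k−1), M_v binary observables on ℂ^{d_D} (v ∈ {0,1}^{N−k+1}), and let ψ be a unit vector in the tensor product space with ⟨ψ, Ŝ_N^+ ψ⟩ = 2^{N−1}√2. For x = (x_3,…,x_N) ∈ {0,1}^{N−2} write σ_x = (−1)^{w(x)(w(x)+1)/2} and T_x = A_{x_3}^{(3)}⊗…⊗A_{x_{k−1}}^{(k−1)}⊗M_{(x_k,…,x_N)}. Then for every x with w(x) odd: σ_x ((A_0^{(1)}+A_1^{(1)})/√2) ⊗ A_0^{(2)} ⊗ T_x ψ = ψ and σ_x ((A_0^{(1)}−A_1^{(1)})/√2) ⊗ A_1^{(2)} ⊗ T_x ψ = ψ; and for every x with w(x) even: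 σ_x ((A_0^{(1)}−A_1^{(1)})/√2) ⊗ A_0^{(2)} ⊗ T_x ψ = ψ and σ_x ((A_0^{(1)}+A_1^{(1)})/√2) ⊗ A_1^{(2)} ⊗ T_x ψ = −ψ. -/
open Matrix

noncomputable section

namespace StmtAux


variable {t s : ℕ}

def ins (t s : ℕ) (b1 b2 : Fin 2) (x : Fin (t + (s + 1)) → Fin 2) :
    Fin (t + 2 + (s + 1)) → Fin 2 :=
  fun i => if (i : ℕ) = 0 then b1 else if (i : ℕ) = 1 then b2
    else x ⟨(i : ℕ) - 2, by have := i.isLt; omega⟩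

def insEquiv (t s : ℕ) : (Fin 2 × Fin 2 × (Fin (t + (s + 1)) → Fin 2)) ≃
    (Fin (t + 2 + (s + 1)) → Fin 2) where
  toFun p := ins t s p.1 p.2.1 p.2.2
  invFun x := (x ⟨0, by omega⟩, x ⟨1, by omega⟩, fun j => x ⟨(j : ℕ) + 2, by have := j.isLt; omega⟩)
  left_inv p := by
    obtain ⟨b1, b2, x⟩ := p
    refine Prod.ext ?_ (Prod.ext ?_ ?_) <;> simp only [ins]
    · simp
    · simp
    · funext j; simp
  right_inv x := by
    funext i
    simp only [ins]
    rcases Nat.lt_or_ge (i : ℕ) 2 with h | h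
    · rcases Nat.lt_or_ge (i : ℕ) 1 with h1 | h1
      · have h0 : (i : ℕ) = 0 := by omega
        rw [if_pos h0]
        exact congrArg x (Fin.ext h0.symm)
      · have h0 : (i : ℕ) = 1 := by omega
        rw [if_neg (by omega), if_pos h0]
        exact congrArg x (Fin.ext h0.symm)
    · rw [if_neg (by omega), if_neg (by omega)]
      exact congrArg x (Fin.ext (by simp; omega))

lemma wt_eq_range (k : ℕ) (y : Fin k → Fin 2) :
    wt y = ∑ i ∈ Finset.range k, (if h : i < k then (y ⟨i, h⟩ : ℕ) else 0) := by
  rw [wt, ← Fin.sum_univ_eq_sum_range (fun i => if h : i < k then ((y ⟨i, h⟩ : Fin 2) : ℕ) else 0)]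
  exact Finset.sum_congr rfl fun i _ => by simp [i.isLt]

lemma wt_ins (b1 b2 : Fin 2) (x : Fin (t + (s + 1)) → Fin 2) :
    wt (ins t s b1 b2 x) = (b1 : ℕ) + (b2 : ℕ) + wt x := by
  classical
  rw [wt_eq_range, wt_eq_range]
  have hrange : Finset.range (t + 2 + (s + 1)) = Finset.range (t + (s + 1) + 2) := by
    rw [show t + 2 + (s + 1) = t + (s + 1) + 2 from by omega]
  rw [hrange, Finset.sum_range_succ', Finset.sum_range_succ']
  have e0 : (if h : 0 < t + 2 + (s + 1) then ((ins t s b1 b2 x) ⟨0, h⟩ : ℕ) else 0) = b1 := by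
    rw [dif_pos (by omega)]; simp [ins]
  have e1 : (if h : 0 + 1 < t + 2 + (s + 1) then ((ins t s b1 b2 x) ⟨0 + 1, h⟩ : ℕ) else 0) = b2 := by
    rw [dif_pos (by omega)]; simp [ins]
  rw [e0, e1]
  have : ∀ i ∈ Finset.range (t + (s + 1)),
      (if h : i + 1 + 1 < t + 2 + (s + 1) then ((ins t s b1 b2 x) ⟨i + 1 + 1, h⟩ : ℕ) else 0)
      = (if h : i < t + (s + 1) then (x ⟨i, h⟩ : ℕ) else 0) := by
    intro i hi
    have hi' : i < t + (s + 1) := Finset.mem_range.mp hi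
    rw [dif_pos (by omega), dif_pos hi']
    simp only [ins]
    rw [if_neg (by simp), if_neg (by simp)]
    congr 1
  rw [Finset.sum_congr rfl this]
  ring


variable {t s : ℕ}
/-- sign as a function of the weight -/
def S (w : ℕ) : ℂ := (-1) ^ (w * (w + 1) / 2)

lemma sgn_eq {n : ℕ} (x : Fin n → Fin 2) : sgn x = S (wt x) := rfl

lemma S_succ (w : ℕ) : S (w + 1) = S w * (-1) ^ (w + 1) := by
  rw [S, S, ← pow_add]
  congr 1
  obtain ⟨c, hc⟩ := Nat.even_mul_succ_self w
  have h2 : (w + 1) * (w + 1 + 1) = w * (w + 1) + 2 * (w + 1) := by ring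
  rw [h2, hc]
  omega

lemma S_succ_succ (w : ℕ) : S (w + 2) = - S w := by
  rw [show w + 2 = (w + 1) + 1 from rfl, S_succ, S_succ, mul_assoc, ← pow_add]
  rw [show w + 1 + (w + 1 + 1) = 2 * (w + 1) + 1 from by omega, pow_succ, pow_mul]
  norm_num

def eta (w : ℕ) : ℂ := (-1) ^ (w + 1)

lemma eta_sq (w : ℕ) : eta w * eta w = 1 := by
  rw [eta, ← pow_add, ← two_mul, pow_mul]; norm_num

lemma eta_cases (w : ℕ) : eta w = 1 ∨ eta w = -1 := by
  rcases Nat.even_or_odd (w + 1) with h | h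
  · left; rw [eta, (Even.neg_one_pow h : ((-1:ℂ)) ^ (w+1) = 1)]
  · right; rw [eta, (Odd.neg_one_pow h : ((-1:ℂ)) ^ (w+1) = -1)]

lemma eta_of_odd {w : ℕ} (h : Odd w) : eta w = 1 := by
  rw [eta]; exact Even.neg_one_pow (by exact Odd.add_one h)

lemma eta_of_even {w : ℕ} (h : Even w) : eta w = -1 := by
  rw [eta]; exact Odd.neg_one_pow (by exact Even.add_one h)

lemma S_add_one (w : ℕ) : S (w + 1) = S w * eta w := (S_succ w)

lemma bigOp_ins {d : Fin (t + 2) → ℕ} {dD : ℕ}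
    (A : (i : Fin (t + 2)) → Fin 2 → Matrix (Fin (d i)) (Fin (d i)) ℂ)
    (M : (Fin (s + 1) → Fin 2) → Matrix (Fin dD) (Fin dD) ℂ)
    (b1 b2 : Fin 2) (x : Fin (t + (s + 1)) → Fin 2) :
    bigOp A M (ins t s b1 b2 x) = tailOp A M (A 0 b1) b2 x := by
  ext ⟨p1, p2⟩ ⟨q1, q2⟩
  simp only [bigOp, tailOp, Matrix.of_apply]
  have h1 : (Fin.succ (0 : Fin (t + 1))) = (1 : Fin (t + 2)) := by ext; simp
  have hM : (fun j => ins t s b1 b2 x (Fin.natAdd (t + 2) j)) = (fun j => x (Fin.natAdd t j)) := by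
    funext j
    simp only [ins]
    rw [if_neg (by simp only [Fin.coe_natAdd]; omega), if_neg (by simp only [Fin.coe_natAdd]; omega)]
    exact congrArg x (Fin.ext (by simp only [Fin.coe_natAdd]; omega))
  rw [Fin.prod_univ_succ, Fin.prod_univ_succ, hM, h1]
  have e0 : ins t s b1 b2 x (Fin.castAdd (s + 1) (0 : Fin (t + 2))) = b1 := by simp [ins]
  have e1 : ins t s b1 b2 x (Fin.castAdd (s + 1) (1 : Fin (t + 2))) = b2 := by
    simp only [ins]
    rw [if_neg (by simp), if_pos (by simp)]
  have e2 : ∀ i : Fin t, ins t s b1 b2 x (Fin.castAdd (s + 1) (i.succ.succ))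
      = x (Fin.castAdd (s + 1) i) := by
    intro i
    simp only [ins]
    rw [if_neg (by simp only [Fin.coe_castAdd, Fin.val_succ]; omega),
      if_neg (by simp only [Fin.coe_castAdd, Fin.val_succ]; omega)]
    exact congrArg x (Fin.ext (by simp only [Fin.coe_castAdd, Fin.val_succ]; omega))
  rw [e0, e1]
  rw [Finset.prod_congr rfl (fun i _ => by rw [e2 i])]
  ring




lemma herm_sq_delta {k : ℕ} (B : Matrix (Fin k) (Fin k) ℂ) (hB : B.IsHermitian)
    (hB2 : B * B = 1) (a b : Fin k) :
    ∑ c, (starRingEnd ℂ) (B c a) * B c b = if a = b then 1 else 0 := by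
  have h1 : ∀ c, (starRingEnd ℂ) (B c a) = B a c := by
    intro c
    conv_rhs => rw [← hB]
    simp [Matrix.conjTranspose_apply]
  calc ∑ c, (starRingEnd ℂ) (B c a) * B c b = ∑ c, B a c * B c b :=
        Finset.sum_congr rfl fun c _ => by rw [h1 c]
    _ = (B * B) a b := (Matrix.mul_apply).symm
    _ = (1 : Matrix (Fin k) (Fin k) ℂ) a b := by rw [hB2]
    _ = if a = b then 1 else 0 := Matrix.one_apply

lemma sum_pi_split {m : ℕ} {D : Fin (m + 2) → ℕ}
    (f0 : Fin (D 0) → ℂ) (f1 : Fin (D (Fin.succ 0)) → ℂ)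
    (f2 : (i : Fin m) → Fin (D i.succ.succ) → ℂ) :
    ∑ g : (i : Fin (m + 2)) → Fin (D i),
      f0 (g 0) * f1 (g (Fin.succ 0)) * ∏ i : Fin m, f2 i (g i.succ.succ)
    = (∑ a, f0 a) * (∑ b, f1 b) * ∏ i : Fin m, (∑ c, f2 i c) := by
  classical
  calc ∑ g : (i : Fin (m + 2)) → Fin (D i),
        f0 (g 0) * f1 (g (Fin.succ 0)) * ∏ i : Fin m, f2 i (g i.succ.succ)
      = ∑ pr : Fin (D 0) × ((j : Fin (m + 1)) → Fin (D j.succ)),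
          f0 pr.1 * f1 (pr.2 0) * ∏ i : Fin m, f2 i (pr.2 i.succ) := by
        refine (Fintype.sum_equiv (Fin.consEquiv fun i : Fin (m + 2) => Fin (D i)) _ _ ?_).symm
        intro pr
        simp [Fin.cons_succ]
    _ = ∑ a : Fin (D 0), ∑ h : (j : Fin (m + 1)) → Fin (D j.succ),
          f0 a * f1 (h 0) * ∏ i : Fin m, f2 i (h i.succ) := Fintype.sum_prod_type _
    _ = ∑ a : Fin (D 0), ∑ pr : Fin (D (Fin.succ 0)) × ((i : Fin m) → Fin (D i.succ.succ)),
          f0 a * f1 pr.1 * ∏ i : Fin m, f2 i (pr.2 i) := by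
        refine Finset.sum_congr rfl fun a _ => ?_
        refine (Fintype.sum_equiv (Fin.consEquiv fun j : Fin (m + 1) => Fin (D j.succ)) _ _ ?_).symm
        intro pr
        simp only [Fin.consEquiv_apply]
        rw [Fin.cons_zero]
        exact congrArg _ (Finset.prod_congr rfl fun i _ => by rw [Fin.cons_succ])
    _ = ∑ a : Fin (D 0), ∑ b : Fin (D (Fin.succ 0)), ∑ g2 : (i : Fin m) → Fin (D i.succ.succ),
          f0 a * f1 b * ∏ i : Fin m, f2 i (g2 i) := by
        refine Finset.sum_congr rfl fun a _ => Fintype.sum_prod_type _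
    _ = (∑ a, f0 a) * (∑ b, f1 b) * ∏ i : Fin m, (∑ c, f2 i c) := by
        simp only [← Finset.mul_sum, ← Finset.sum_mul]
        rw [← Fintype.prod_sum]


lemma gram {t s : ℕ} {d : Fin (t + 2) → ℕ} {dD : ℕ}
    (A : (i : Fin (t + 2)) → Fin 2 → Matrix (Fin (d i)) (Fin (d i)) ℂ)
    (M : (Fin (s + 1) → Fin 2) → Matrix (Fin dD) (Fin dD) ℂ)
    (hAherm : ∀ i b, (A i b).IsHermitian) (hAsq : ∀ i b, A i b * A i b = 1)
    (hMherm : ∀ v, (M v).IsHermitian) (hMsq : ∀ v, M v * M v = 1)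
    (C : Matrix (Fin (d 0)) (Fin (d 0)) ℂ) (b2 : Fin 2) (x : Fin (t + (s + 1)) → Fin 2)
    (q q' : FullIdx t d dD) :
    ∑ p : FullIdx t d dD,
      (starRingEnd ℂ) (tailOp A M C b2 x p q) * tailOp A M C b2 x p q'
    = (Cᴴ * C) (q.1 0) (q'.1 0) *
      ((if q.1 1 = q'.1 1 then (1 : ℂ) else 0) *
        (∏ i : Fin t, if q.1 i.succ.succ = q'.1 i.succ.succ then (1 : ℂ) else 0) *
        (if q.2 = q'.2 then (1 : ℂ) else 0)) := by
  classical
  have h1 : (1 : Fin (t + 2)) = Fin.succ 0 := by ext; simp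
  simp only [tailOp, Matrix.of_apply]
  rw [h1]
  rw [Fintype.sum_prod_type]
  have hsummand : ∀ (p1 : (i : Fin (t + 2)) → Fin (d i)) (p2 : Fin dD),
      (starRingEnd ℂ) (C (p1 0) (q.1 0) * A (Fin.succ 0) b2 (p1 (Fin.succ 0)) (q.1 (Fin.succ 0)) *
          (∏ i : Fin t, A i.succ.succ (x (Fin.castAdd (s + 1) i)) (p1 i.succ.succ) (q.1 i.succ.succ)) *
          M (fun j => x (Fin.natAdd t j)) p2 q.2) *
        (C (p1 0) (q'.1 0) * A (Fin.succ 0) b2 (p1 (Fin.succ 0)) (q'.1 (Fin.succ 0)) *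
          (∏ i : Fin t, A i.succ.succ (x (Fin.castAdd (s + 1) i)) (p1 i.succ.succ) (q'.1 i.succ.succ)) *
          M (fun j => x (Fin.natAdd t j)) p2 q'.2)
      = (((starRingEnd ℂ) (C (p1 0) (q.1 0)) * C (p1 0) (q'.1 0)) *
          ((starRingEnd ℂ) (A (Fin.succ 0) b2 (p1 (Fin.succ 0)) (q.1 (Fin.succ 0))) *
            A (Fin.succ 0) b2 (p1 (Fin.succ 0)) (q'.1 (Fin.succ 0))) *
          ∏ i : Fin t,
            ((starRingEnd ℂ) (A i.succ.succ (x (Fin.castAdd (s + 1) i)) (p1 i.succ.succ) (q.1 i.succ.succ)) *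
              A i.succ.succ (x (Fin.castAdd (s + 1) i)) (p1 i.succ.succ) (q'.1 i.succ.succ))) *
        ((starRingEnd ℂ) (M (fun j => x (Fin.natAdd t j)) p2 q.2) *
          M (fun j => x (Fin.natAdd t j)) p2 q'.2) := by
    intro p1 p2
    simp only [_root_.map_mul, map_prod, Finset.prod_mul_distrib]
    ring
  trans ((∑ p1 : (i : Fin (t + 2)) → Fin (d i),
          (((starRingEnd ℂ) (C (p1 0) (q.1 0)) * C (p1 0) (q'.1 0)) *
            ((starRingEnd ℂ) (A (Fin.succ 0) b2 (p1 (Fin.succ 0)) (q.1 (Fin.succ 0))) *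
              A (Fin.succ 0) b2 (p1 (Fin.succ 0)) (q'.1 (Fin.succ 0))) *
            ∏ i : Fin t,
              ((starRingEnd ℂ) (A i.succ.succ (x (Fin.castAdd (s + 1) i)) (p1 i.succ.succ) (q.1 i.succ.succ)) *
                A i.succ.succ (x (Fin.castAdd (s + 1) i)) (p1 i.succ.succ) (q'.1 i.succ.succ)))) *
        (∑ p2 : Fin dD,
          ((starRingEnd ℂ) (M (fun j => x (Fin.natAdd t j)) p2 q.2) *
            M (fun j => x (Fin.natAdd t j)) p2 q'.2)))
  · exact Eq.trans
      (Finset.sum_congr rfl fun p1 _ => Finset.sum_congr rfl fun p2 _ => hsummand p1 p2)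
      (Fintype.sum_mul_sum _ _).symm
  · show _ = (Cᴴ * C) (q.1 0) (q'.1 0) *
          ((if q.1 (Fin.succ 0) = q'.1 (Fin.succ 0) then (1 : ℂ) else 0) *
            (∏ i : Fin t, if q.1 i.succ.succ = q'.1 i.succ.succ then (1 : ℂ) else 0) *
            (if q.2 = q'.2 then (1 : ℂ) else 0))
    rw [sum_pi_split (D := fun i => d i)
          (fun a => (starRingEnd ℂ) (C a (q.1 0)) * C a (q'.1 0))
          (fun a => (starRingEnd ℂ) (A (Fin.succ 0) b2 a (q.1 (Fin.succ 0))) *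
            A (Fin.succ 0) b2 a (q'.1 (Fin.succ 0)))
          (fun i a => (starRingEnd ℂ) (A i.succ.succ (x (Fin.castAdd (s + 1) i)) a (q.1 i.succ.succ)) *
            A i.succ.succ (x (Fin.castAdd (s + 1) i)) a (q'.1 i.succ.succ))]
    rw [herm_sq_delta (M (fun j => x (Fin.natAdd t j))) (hMherm _) (hMsq _)]
    rw [herm_sq_delta (A (Fin.succ 0) b2) (hAherm _ _) (hAsq _ _)]
    have hC : ∑ a, (starRingEnd ℂ) (C a (q.1 0)) * C a (q'.1 0) = (Cᴴ * C) (q.1 0) (q'.1 0) := by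
      rw [Matrix.mul_apply]
      exact Finset.sum_congr rfl fun a _ => by rw [Matrix.conjTranspose_apply]; rfl
    rw [hC]
    rw [Finset.prod_congr rfl fun (i : Fin t) _ =>
      herm_sq_delta (A i.succ.succ (x (Fin.castAdd (s + 1) i))) (hAherm _ _) (hAsq _ _)
        (q.1 i.succ.succ) (q'.1 i.succ.succ)]
    ring



lemma conj_sgn {n : ℕ} (x : Fin n → Fin 2) : (starRingEnd ℂ) (sgn x) = sgn x := by
  rw [sgn, map_pow, map_neg, _root_.map_one]

lemma conj_sgn_mul {n : ℕ} (x : Fin n → Fin 2) : (starRingEnd ℂ) (sgn x) * sgn x = 1 := by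
  rw [conj_sgn, sgn, ← pow_add, ← two_mul, pow_mul]
  norm_num

lemma normsum_eq {I : Type*} [Fintype I] (T : Matrix I I ℂ) (ψ : I → ℂ) :
    ∑ p, (starRingEnd ℂ) ((T.mulVec ψ) p) * (T.mulVec ψ) p
    = ∑ q, ∑ q', (starRingEnd ℂ) (ψ q) * ψ q' * ∑ p, (starRingEnd ℂ) (T p q) * T p q' := by
  have step : ∀ p, (starRingEnd ℂ) ((T.mulVec ψ) p) * (T.mulVec ψ) p
      = ∑ q, ∑ q', ((starRingEnd ℂ) (T p q) * (starRingEnd ℂ) (ψ q)) * (T p q' * ψ q') := by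
    intro p
    simp only [Matrix.mulVec, dotProduct]
    rw [map_sum, Finset.sum_mul_sum]
    exact Finset.sum_congr rfl fun q _ => Finset.sum_congr rfl fun q' _ => by
      rw [_root_.map_mul]
  rw [Finset.sum_congr rfl fun p _ => step p]
  rw [Finset.sum_comm]
  refine Finset.sum_congr rfl fun q _ => ?_
  rw [Finset.sum_comm]
  refine Finset.sum_congr rfl fun q' _ => ?_
  rw [Finset.mul_sum]
  exact Finset.sum_congr rfl fun p _ => by ring

lemma normsum_smul {I : Type*} [Fintype I] (c : ℂ) (hc : (starRingEnd ℂ) c * c = 1)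
    (T : Matrix I I ℂ) (ψ : I → ℂ) :
    ∑ p, (starRingEnd ℂ) (((c • T).mulVec ψ) p) * ((c • T).mulVec ψ) p
    = ∑ p, (starRingEnd ℂ) ((T.mulVec ψ) p) * (T.mulVec ψ) p := by
  refine Finset.sum_congr rfl fun p _ => ?_
  rw [Matrix.smul_mulVec]
  simp only [Pi.smul_apply, smul_eq_mul, _root_.map_mul]
  calc (starRingEnd ℂ) c * (starRingEnd ℂ) (T.mulVec ψ p) * (c * T.mulVec ψ p)
      = ((starRingEnd ℂ) c * c) * ((starRingEnd ℂ) (T.mulVec ψ p) * T.mulVec ψ p) := by ring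
    _ = _ := by rw [hc, one_mul]

lemma fin_three_cases {m : ℕ} (i : Fin (m + 2)) :
    i = 0 ∨ i = 1 ∨ ∃ j : Fin m, i = j.succ.succ := by
  rcases i with ⟨iv, hi⟩
  match iv with
  | 0 => exact Or.inl (by ext; simp)
  | 1 => exact Or.inr (Or.inl (by ext; simp))
  | (k+2) =>
    refine Or.inr (Or.inr ⟨⟨k, by omega⟩, ?_⟩)
    ext
    simp [Fin.val_succ]

lemma sq_term {k : ℕ} (X Y : Matrix (Fin k) (Fin k) ℂ) (hX2 : X * X = 1) (hY2 : Y * Y = 1)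
    (r u : ℂ) (hr2 : r * r = 2⁻¹) (hu : u * u = 1) :
    (r • (X + u • Y)) * (r • (X + u • Y))
      = (2 : ℂ)⁻¹ • (((1 : Matrix (Fin k) (Fin k) ℂ) + 1) + (u • (X * Y) + u • (Y * X))) := by
  rw [Matrix.smul_mul, Matrix.mul_smul, smul_smul, hr2]
  congr 1
  rw [Matrix.add_mul, Matrix.mul_add, Matrix.mul_add, Matrix.smul_mul, Matrix.mul_smul,
    Matrix.mul_smul, Matrix.smul_mul, smul_smul, hu, hX2, hY2, one_smul]
  module

lemma Csum {k : ℕ} (X Y : Matrix (Fin k) (Fin k) ℂ) (hX : Xᴴ = X) (hY : Yᴴ = Y)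
    (hX2 : X * X = 1) (hY2 : Y * Y = 1) (r e : ℂ) (hrc : (starRingEnd ℂ) r = r)
    (hr2 : r * r = 2⁻¹) (he : e = 1 ∨ e = -1) :
    (r • (X + e • Y))ᴴ * (r • (X + e • Y)) + (r • (X - e • Y))ᴴ * (r • (X - e • Y))
      = (2 : ℂ) • 1 := by
  have hec : (starRingEnd ℂ) e = e := by rcases he with rfl | rfl <;> simp
  have hee : e * e = 1 := by rcases he with rfl | rfl <;> norm_num
  have hH1 : (r • (X + e • Y))ᴴ = r • (X + e • Y) := by
    rw [Matrix.conjTranspose_smul, Matrix.conjTranspose_add, Matrix.conjTranspose_smul,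
      hX, hY]
    rw [starRingEnd_apply] at hrc hec
    rw [hrc, hec]
  have hH2 : (r • (X - e • Y))ᴴ = r • (X - e • Y) := by
    rw [Matrix.conjTranspose_smul, Matrix.conjTranspose_sub, Matrix.conjTranspose_smul,
      hX, hY]
    rw [starRingEnd_apply] at hrc hec
    rw [hrc, hec]
  rw [hH1, hH2]
  have hsub : X - e • Y = X + (-e) • Y := by rw [neg_smul, sub_eq_add_neg]
  rw [hsub, sq_term X Y hX2 hY2 r e hr2 hee,
    sq_term X Y hX2 hY2 r (-e) hr2 (by rw [neg_mul_neg]; exact hee)]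
  module


lemma insEquiv_apply (t s : ℕ) (b1 b2 : Fin 2) (x : Fin (t + (s + 1)) → Fin 2) :
    insEquiv t s (b1, b2, x) = ins t s b1 b2 x := rfl

section Ops
variable {t s : ℕ} {d : Fin (t + 2) → ℕ} {dD : ℕ}
  (A : (i : Fin (t + 2)) → Fin 2 → Matrix (Fin (d i)) (Fin (d i)) ℂ)
  (M : (Fin (s + 1) → Fin 2) → Matrix (Fin dD) (Fin dD) ℂ)

lemma tailOp_smul (c : ℂ) (P : Matrix (Fin (d 0)) (Fin (d 0)) ℂ) (b : Fin 2)
    (x : Fin (t + (s + 1)) → Fin 2) :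
    tailOp A M (c • P) b x = c • tailOp A M P b x := by
  ext p q
  simp only [tailOp, Matrix.of_apply, Matrix.smul_apply, smul_eq_mul]
  ring

lemma tailOp_add (P Q : Matrix (Fin (d 0)) (Fin (d 0)) ℂ) (b : Fin 2)
    (x : Fin (t + (s + 1)) → Fin 2) :
    tailOp A M (P + Q) b x = tailOp A M P b x + tailOp A M Q b x := by
  ext p q
  simp only [tailOp, Matrix.of_apply, Matrix.add_apply]
  ring

lemma tailOp_sub (P Q : Matrix (Fin (d 0)) (Fin (d 0)) ℂ) (b : Fin 2)
    (x : Fin (t + (s + 1)) → Fin 2) :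
    tailOp A M (P - Q) b x = tailOp A M P b x - tailOp A M Q b x := by
  ext p q
  simp only [tailOp, Matrix.of_apply, Matrix.sub_apply]
  ring

lemma delta_full (q q' : FullIdx t d dD) :
    (if q.1 0 = q'.1 0 then (1 : ℂ) else 0) *
      ((if q.1 1 = q'.1 1 then (1 : ℂ) else 0) *
        (∏ i : Fin t, if q.1 i.succ.succ = q'.1 i.succ.succ then (1 : ℂ) else 0) *
        (if q.2 = q'.2 then (1 : ℂ) else 0))
    = if q = q' then 1 else 0 := by
  classical
  rw [Fintype.prod_boole]
  by_cases h : q = q'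
  · subst h; simp
  · rw [if_neg h]
    by_cases h0 : q.1 0 = q'.1 0
    swap
    · simp [h0]
    by_cases h1 : q.1 1 = q'.1 1
    swap
    · simp [h1]
    by_cases h2 : ∀ i : Fin t, q.1 i.succ.succ = q'.1 i.succ.succ
    swap
    · simp [h2]
    by_cases h3 : q.2 = q'.2
    swap
    · simp [h3]
    exfalso
    apply h
    have hfst : q.1 = q'.1 := by
      funext i
      rcases fin_three_cases i with rfl | rfl | ⟨j, rfl⟩
      exacts [h0, h1, h2 j]
    exact Prod.ext hfst h3

lemma svet_decomp :
    svetOp A M = ∑ x : Fin (t + (s + 1)) → Fin 2,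
      ((sgn x • tailOp A M (A 0 0) 0 x + (sgn x * eta (wt x)) • tailOp A M (A 0 0) 1 x)
        + ((sgn x * eta (wt x)) • tailOp A M (A 0 1) 0 x + (- sgn x) • tailOp A M (A 0 1) 1 x)) := by
  rw [svetOp]
  rw [← Equiv.sum_comp (insEquiv t s) (fun y => sgn y • bigOp A M y)]
  rw [Fintype.sum_prod_type]
  rw [Finset.sum_congr rfl fun b1 _ => Fintype.sum_prod_type
    (fun pz : Fin 2 × (Fin (t + (s + 1)) → Fin 2) =>
      sgn (insEquiv t s (b1, pz)) • bigOp A M (insEquiv t s (b1, pz)))]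
  simp only [Fin.sum_univ_two]
  rw [← Finset.sum_add_distrib, ← Finset.sum_add_distrib, ← Finset.sum_add_distrib]
  refine Finset.sum_congr rfl fun x _ => ?_
  simp only [insEquiv_apply, bigOp_ins]
  have c00 : sgn (ins t s 0 0 x) = sgn x := by
    have hw : wt (ins t s 0 0 x) = wt x := by rw [wt_ins]; simp
    rw [sgn_eq, hw, ← sgn_eq]
  have c01 : sgn (ins t s 0 1 x) = sgn x * eta (wt x) := by
    have hw : wt (ins t s 0 1 x) = wt x + 1 := by rw [wt_ins]; simp; omega
    rw [sgn_eq, hw, S_add_one, ← sgn_eq]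
  have c10 : sgn (ins t s 1 0 x) = sgn x * eta (wt x) := by
    have hw : wt (ins t s 1 0 x) = wt x + 1 := by rw [wt_ins]; simp; omega
    rw [sgn_eq, hw, S_add_one, ← sgn_eq]
  have c11 : sgn (ins t s 1 1 x) = - sgn x := by
    have hw : wt (ins t s 1 1 x) = wt x + 2 := by rw [wt_ins]; simp; omega
    rw [sgn_eq, hw, S_succ_succ, ← sgn_eq]
  rw [c00, c01, c10, c11]

lemma pair_norm
    (hAherm : ∀ i b, (A i b).IsHermitian) (hAsq : ∀ i b, A i b * A i b = 1)
    (hMherm : ∀ v, (M v).IsHermitian) (hMsq : ∀ v, M v * M v = 1)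
    (ψ : FullIdx t d dD → ℂ) (hψc : ∑ p, (starRingEnd ℂ) (ψ p) * ψ p = 1)
    (x : Fin (t + (s + 1)) → Fin 2) (e r : ℂ) (he : e = 1 ∨ e = -1)
    (hrc : (starRingEnd ℂ) r = r) (hr2 : r * r = 2⁻¹) :
    (∑ p, (starRingEnd ℂ) (((sgn x • tailOp A M (r • (A 0 0 + e • A 0 1)) 0 x).mulVec ψ) p) *
        ((sgn x • tailOp A M (r • (A 0 0 + e • A 0 1)) 0 x).mulVec ψ) p)
    + (∑ p, (starRingEnd ℂ) (((sgn x • tailOp A M (r • (A 0 0 - e • A 0 1)) 1 x).mulVec ψ) p) *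
        ((sgn x • tailOp A M (r • (A 0 0 - e • A 0 1)) 1 x).mulVec ψ) p) = 2 := by
  classical
  rw [normsum_smul _ (conj_sgn_mul x) _ ψ, normsum_smul _ (conj_sgn_mul x) _ ψ,
    normsum_eq, normsum_eq]
  simp only [gram A M hAherm hAsq hMherm hMsq]
  have hC := Csum (A 0 0) (A 0 1) (hAherm 0 0) (hAherm 0 1) (hAsq 0 0) (hAsq 0 1)
    r e hrc hr2 he
  have hkey : ∀ q q' : FullIdx t d dD,
      (starRingEnd ℂ) (ψ q) * ψ q' *
          (((r • (A 0 0 + e • A 0 1))ᴴ * (r • (A 0 0 + e • A 0 1))) (q.1 0) (q'.1 0) *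
            ((if q.1 1 = q'.1 1 then (1 : ℂ) else 0) *
              (∏ i : Fin t, if q.1 i.succ.succ = q'.1 i.succ.succ then (1 : ℂ) else 0) *
              (if q.2 = q'.2 then (1 : ℂ) else 0)))
        + (starRingEnd ℂ) (ψ q) * ψ q' *
          (((r • (A 0 0 - e • A 0 1))ᴴ * (r • (A 0 0 - e • A 0 1))) (q.1 0) (q'.1 0) *
            ((if q.1 1 = q'.1 1 then (1 : ℂ) else 0) *
              (∏ i : Fin t, if q.1 i.succ.succ = q'.1 i.succ.succ then (1 : ℂ) else 0) *
              (if q.2 = q'.2 then (1 : ℂ) else 0)))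
      = (starRingEnd ℂ) (ψ q) * ψ q' * (2 * if q = q' then 1 else 0) := by
    intro q q'
    have h1 : (((r • (A 0 0 + e • A 0 1))ᴴ * (r • (A 0 0 + e • A 0 1))) (q.1 0) (q'.1 0))
        + (((r • (A 0 0 - e • A 0 1))ᴴ * (r • (A 0 0 - e • A 0 1))) (q.1 0) (q'.1 0))
        = 2 * (if q.1 0 = q'.1 0 then (1 : ℂ) else 0) := by
      rw [← Matrix.add_apply, hC, Matrix.smul_apply, Matrix.one_apply, smul_eq_mul]
    calc _ = (starRingEnd ℂ) (ψ q) * ψ q' *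
          (((((r • (A 0 0 + e • A 0 1))ᴴ * (r • (A 0 0 + e • A 0 1))) (q.1 0) (q'.1 0))
            + (((r • (A 0 0 - e • A 0 1))ᴴ * (r • (A 0 0 - e • A 0 1))) (q.1 0) (q'.1 0))) *
            ((if q.1 1 = q'.1 1 then (1 : ℂ) else 0) *
              (∏ i : Fin t, if q.1 i.succ.succ = q'.1 i.succ.succ then (1 : ℂ) else 0) *
              (if q.2 = q'.2 then (1 : ℂ) else 0))) := by ring
      _ = (starRingEnd ℂ) (ψ q) * ψ q' * (2 * if q = q' then 1 else 0) := by
          rw [h1, ← delta_full q q']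
          ring
  have hcollapse : ∀ q : FullIdx t d dD,
      ∑ q', (starRingEnd ℂ) (ψ q) * ψ q' * (2 * if q = q' then 1 else 0)
        = (starRingEnd ℂ) (ψ q) * ψ q * 2 := by
    intro q
    rw [Finset.sum_eq_single q]
    · rw [if_pos rfl]; ring
    · intro b _ hb
      rw [if_neg fun hqb => hb hqb.symm]
      ring
    · intro hq; exact absurd (Finset.mem_univ q) hq
  calc (∑ q : FullIdx t d dD, ∑ q' : FullIdx t d dD, (starRingEnd ℂ) (ψ q) * ψ q' *
          (((r • (A 0 0 + e • A 0 1))ᴴ * (r • (A 0 0 + e • A 0 1))) (q.1 0) (q'.1 0) *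
            ((if q.1 1 = q'.1 1 then (1 : ℂ) else 0) *
              (∏ i : Fin t, if q.1 i.succ.succ = q'.1 i.succ.succ then (1 : ℂ) else 0) *
              (if q.2 = q'.2 then (1 : ℂ) else 0))))
      + (∑ q : FullIdx t d dD, ∑ q' : FullIdx t d dD, (starRingEnd ℂ) (ψ q) * ψ q' *
          (((r • (A 0 0 - e • A 0 1))ᴴ * (r • (A 0 0 - e • A 0 1))) (q.1 0) (q'.1 0) *
            ((if q.1 1 = q'.1 1 then (1 : ℂ) else 0) *
              (∏ i : Fin t, if q.1 i.succ.succ = q'.1 i.succ.succ then (1 : ℂ) else 0) *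
              (if q.2 = q'.2 then (1 : ℂ) else 0))))
      = ∑ q : FullIdx t d dD, ∑ q' : FullIdx t d dD,
          (starRingEnd ℂ) (ψ q) * ψ q' * (2 * if q = q' then 1 else 0) := by
        rw [← Finset.sum_add_distrib]
        refine Finset.sum_congr rfl fun q _ => ?_
        rw [← Finset.sum_add_distrib]
        exact Finset.sum_congr rfl fun q' _ => hkey q q'
    _ = ∑ q : FullIdx t d dD, (starRingEnd ℂ) (ψ q) * ψ q * 2 :=
        Finset.sum_congr rfl fun q _ => hcollapse q
    _ = 2 := by rw [← Finset.sum_mul, hψc, one_mul]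

lemma ip_mulVec_sumswap {I : Type*} [Fintype I] {α : Type*} [Fintype α]
    (ψ : I → ℂ) (B : α → Matrix I I ℂ) :
    ∑ a, ∑ p, (starRingEnd ℂ) (ψ p) * ((B a).mulVec ψ) p
    = ∑ p, (starRingEnd ℂ) (ψ p) * ((∑ a, B a).mulVec ψ) p := by
  rw [Finset.sum_comm]
  refine Finset.sum_congr rfl fun p _ => ?_
  rw [← Finset.mul_sum]
  congr 1
  simp only [Matrix.mulVec, dotProduct, Matrix.sum_apply, Finset.sum_mul]
  rw [Finset.sum_comm]

lemma ip_mulVec_smul {I : Type*} [Fintype I] (ψ : I → ℂ) (c : ℂ) (B : Matrix I I ℂ) :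
    ∑ p, (starRingEnd ℂ) (ψ p) * ((c • B).mulVec ψ) p
    = c * ∑ p, (starRingEnd ℂ) (ψ p) * (B.mulVec ψ) p := by
  rw [Finset.mul_sum]
  refine Finset.sum_congr rfl fun p _ => ?_
  rw [Matrix.smul_mulVec]
  simp only [Pi.smul_apply, smul_eq_mul]
  ring

lemma ip_mulVec_add {I : Type*} [Fintype I] (ψ : I → ℂ) (B C : Matrix I I ℂ) :
    ∑ p, (starRingEnd ℂ) (ψ p) * ((B + C).mulVec ψ) p
    = (∑ p, (starRingEnd ℂ) (ψ p) * (B.mulVec ψ) p)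
      + ∑ p, (starRingEnd ℂ) (ψ p) * (C.mulVec ψ) p := by
  rw [← Finset.sum_add_distrib]
  refine Finset.sum_congr rfl fun p _ => ?_
  rw [Matrix.add_mulVec]
  simp only [Pi.add_apply]
  ring

end Ops


end StmtAux

/-- Maximal violation implies the eigenvector conditions (A12)–(A15): for a unit state `ψ`
attaining `⟨ψ, Ŝ_N^+ ψ⟩ = 2^{N-1}√2` (with `k - 1 = t + 2` honest parties, so `3 ≤ k ≤ N`,
and `N = (t+2)+(s+1)`), each square in the sum-of-squares decomposition stabilizes `ψ`. -/
theorem stmt_10 (t s : ℕ) (d : Fin (t + 2) → ℕ) (dD : ℕ)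
    (A : (i : Fin (t + 2)) → Fin 2 → Matrix (Fin (d i)) (Fin (d i)) ℂ)
    (M : (Fin (s + 1) → Fin 2) → Matrix (Fin dD) (Fin dD) ℂ)
    (hAherm : ∀ i b, (A i b).IsHermitian) (hAsq : ∀ i b, A i b * A i b = 1)
    (hMherm : ∀ v, (M v).IsHermitian) (hMsq : ∀ v, M v * M v = 1)
    (ψ : FullIdx t d dD → ℂ) (hψ : (∑ p, ‖ψ p‖ ^ 2) = 1)
    (hmax : ∑ p, (starRingEnd ℂ) (ψ p) * (svetOp A M).mulVec ψ p =
      ((2 ^ (t + s + 2) * Real.sqrt 2 : ℝ) : ℂ)) :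
    ∀ x : Fin (t + (s + 1)) → Fin 2,
      (Odd (wt x) →
        (sgn x • tailOp A M (((Real.sqrt 2 : ℂ))⁻¹ • (A 0 0 + A 0 1)) 0 x).mulVec ψ = ψ ∧
        (sgn x • tailOp A M (((Real.sqrt 2 : ℂ))⁻¹ • (A 0 0 - A 0 1)) 1 x).mulVec ψ = ψ) ∧
      (Even (wt x) →
        (sgn x • tailOp A M (((Real.sqrt 2 : ℂ))⁻¹ • (A 0 0 - A 0 1)) 0 x).mulVec ψ = ψ ∧
        (sgn x • tailOp A M (((Real.sqrt 2 : ℂ))⁻¹ • (A 0 0 + A 0 1)) 1 x).mulVec ψ = -ψ) := by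
  classical
  have hrc : (starRingEnd ℂ) ((Real.sqrt 2 : ℂ))⁻¹ = ((Real.sqrt 2 : ℂ))⁻¹ := by
    rw [map_inv₀, Complex.conj_ofReal]
  have hs2 : (Real.sqrt 2 : ℂ) * (Real.sqrt 2 : ℂ) = 2 := by
    rw [← Complex.ofReal_mul, Real.mul_self_sqrt (by norm_num : (0:ℝ) ≤ 2)]
    norm_num
  have hr2 : ((Real.sqrt 2 : ℂ))⁻¹ * ((Real.sqrt 2 : ℂ))⁻¹ = 2⁻¹ := by
    rw [← mul_inv, hs2]
  have hsqrt_ne : (Real.sqrt 2 : ℂ) ≠ 0 := by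
    simp only [ne_eq, Complex.ofReal_eq_zero]
    positivity
  have hrs : ((Real.sqrt 2 : ℂ))⁻¹ * (Real.sqrt 2 : ℂ) = 1 := inv_mul_cancel₀ hsqrt_ne
  have hψc : ∑ p, (starRingEnd ℂ) (ψ p) * ψ p = 1 := by
    have h1 : ∀ p : FullIdx t d dD, (starRingEnd ℂ) (ψ p) * ψ p = ((‖ψ p‖ ^ 2 : ℝ) : ℂ) := by
      intro p
      rw [RCLike.conj_mul, Complex.ofReal_pow]
      norm_num
    rw [Finset.sum_congr rfl fun p _ => h1 p, ← Complex.ofReal_sum, hψ, Complex.ofReal_one]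
  have main : ∀ x : Fin (t + (s + 1)) → Fin 2,
      (sgn x • tailOp A M (((Real.sqrt 2 : ℂ))⁻¹ • (A 0 0 + (StmtAux.eta (wt x)) • A 0 1)) 0 x).mulVec ψ = ψ
      ∧ (sgn x • tailOp A M (((Real.sqrt 2 : ℂ))⁻¹ • (A 0 0 - (StmtAux.eta (wt x)) • A 0 1)) 1 x).mulVec ψ
        = (StmtAux.eta (wt x)) • ψ := by
    have hmatrix : ∀ x : Fin (t + (s + 1)) → Fin 2,
        (sgn x • tailOp A M (((Real.sqrt 2 : ℂ))⁻¹ • (A 0 0 + (StmtAux.eta (wt x)) • A 0 1)) 0 x) + (StmtAux.eta (wt x)) • (sgn x • tailOp A M (((Real.sqrt 2 : ℂ))⁻¹ • (A 0 0 - (StmtAux.eta (wt x)) • A 0 1)) 1 x) = ((Real.sqrt 2 : ℂ))⁻¹ • ((sgn x • tailOp A M (A 0 0) 0 x + (sgn x * StmtAux.eta (wt x)) • tailOp A M (A 0 0) 1 x) + ((sgn x * StmtAux.eta (wt x)) • tailOp A M (A 0 1) 0 x + (- sgn x) • tailOp A M (A 0 1) 1 x)) := by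
      intro x
      rw [StmtAux.tailOp_smul, StmtAux.tailOp_smul, StmtAux.tailOp_add, StmtAux.tailOp_sub,
        StmtAux.tailOp_smul, StmtAux.tailOp_smul]
      rcases StmtAux.eta_cases (wt x) with h | h <;> rw [h] <;> module
    have hcross : ∑ x : Fin (t + (s + 1)) → Fin 2,
        ((∑ p, (starRingEnd ℂ) (ψ p) * ((sgn x • tailOp A M (((Real.sqrt 2 : ℂ))⁻¹ • (A 0 0 + (StmtAux.eta (wt x)) • A 0 1)) 0 x).mulVec ψ) p) + (StmtAux.eta (wt x)) * (∑ p, (starRingEnd ℂ) (ψ p) * ((sgn x • tailOp A M (((Real.sqrt 2 : ℂ))⁻¹ • (A 0 0 - (StmtAux.eta (wt x)) • A 0 1)) 1 x).mulVec ψ) p)) = 2 ^ (t + s + 2) := by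
      have step : ∀ x : Fin (t + (s + 1)) → Fin 2,
          (∑ p, (starRingEnd ℂ) (ψ p) * ((sgn x • tailOp A M (((Real.sqrt 2 : ℂ))⁻¹ • (A 0 0 + (StmtAux.eta (wt x)) • A 0 1)) 0 x).mulVec ψ) p) + (StmtAux.eta (wt x)) * (∑ p, (starRingEnd ℂ) (ψ p) * ((sgn x • tailOp A M (((Real.sqrt 2 : ℂ))⁻¹ • (A 0 0 - (StmtAux.eta (wt x)) • A 0 1)) 1 x).mulVec ψ) p)
          = ∑ p, (starRingEnd ℂ) (ψ p) * ((((Real.sqrt 2 : ℂ))⁻¹ • ((sgn x • tailOp A M (A 0 0) 0 x + (sgn x * StmtAux.eta (wt x)) • tailOp A M (A 0 0) 1 x) + ((sgn x * StmtAux.eta (wt x)) • tailOp A M (A 0 1) 0 x + (- sgn x) • tailOp A M (A 0 1) 1 x))).mulVec ψ) p := by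
        intro x
        rw [← StmtAux.ip_mulVec_smul ψ (StmtAux.eta (wt x)), ← StmtAux.ip_mulVec_add, hmatrix x]
      rw [Finset.sum_congr rfl fun x _ => step x]
      rw [StmtAux.ip_mulVec_sumswap]
      rw [← Finset.smul_sum]
      rw [StmtAux.ip_mulVec_smul]
      rw [← StmtAux.svet_decomp A M]
      rw [hmax, Complex.ofReal_mul]
      rw [show ((Real.sqrt 2 : ℂ))⁻¹ * (((2 ^ (t + s + 2) : ℝ) : ℂ) * ((Real.sqrt 2 : ℝ) : ℂ))
          = (((Real.sqrt 2 : ℂ))⁻¹ * ((Real.sqrt 2 : ℝ) : ℂ)) * ((2 ^ (t + s + 2) : ℝ) : ℂ) from by ring]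
      rw [hrs, one_mul]
      push_cast
      ring
    have expand_gen : ∀ (u z : FullIdx t d dD → ℂ),
        ∑ p, (starRingEnd ℂ) ((u - z) p) * (u - z) p
        = (∑ p, (starRingEnd ℂ) (u p) * u p) + (∑ p, (starRingEnd ℂ) (z p) * z p)
          - ((∑ p, (starRingEnd ℂ) (z p) * u p) + (starRingEnd ℂ) (∑ p, (starRingEnd ℂ) (z p) * u p)) := by
      intro u z
      have hconj : ∑ p, (starRingEnd ℂ) (u p) * z p
          = (starRingEnd ℂ) (∑ p, (starRingEnd ℂ) (z p) * u p) := by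
        rw [map_sum]
        exact Finset.sum_congr rfl fun p _ => by
          rw [_root_.map_mul, Complex.conj_conj]; ring
      calc ∑ p, (starRingEnd ℂ) ((u - z) p) * (u - z) p
          = ∑ p, (((starRingEnd ℂ) (u p) * u p + (starRingEnd ℂ) (z p) * z p)
              - ((starRingEnd ℂ) (z p) * u p + (starRingEnd ℂ) (u p) * z p)) := by
            refine Finset.sum_congr rfl fun p _ => ?_
            simp only [Pi.sub_apply, map_sub]
            ring
        _ = ((∑ p, (starRingEnd ℂ) (u p) * u p) + ∑ p, (starRingEnd ℂ) (z p) * z p)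
            - ((∑ p, (starRingEnd ℂ) (z p) * u p) + ∑ p, (starRingEnd ℂ) (u p) * z p) := by
            rw [Finset.sum_sub_distrib, Finset.sum_add_distrib, Finset.sum_add_distrib]
        _ = _ := by rw [hconj]
    have hpair : ∀ x : Fin (t + (s + 1)) → Fin 2, (∑ p, (starRingEnd ℂ) (((sgn x • tailOp A M (((Real.sqrt 2 : ℂ))⁻¹ • (A 0 0 + (StmtAux.eta (wt x)) • A 0 1)) 0 x).mulVec ψ) p) * ((sgn x • tailOp A M (((Real.sqrt 2 : ℂ))⁻¹ • (A 0 0 + (StmtAux.eta (wt x)) • A 0 1)) 0 x).mulVec ψ) p) + (∑ p, (starRingEnd ℂ) (((sgn x • tailOp A M (((Real.sqrt 2 : ℂ))⁻¹ • (A 0 0 - (StmtAux.eta (wt x)) • A 0 1)) 1 x).mulVec ψ) p) * ((sgn x • tailOp A M (((Real.sqrt 2 : ℂ))⁻¹ • (A 0 0 - (StmtAux.eta (wt x)) • A 0 1)) 1 x).mulVec ψ) p) = 2 := fun x =>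
      StmtAux.pair_norm A M hAherm hAsq hMherm hMsq ψ hψc x (StmtAux.eta (wt x)) ((Real.sqrt 2 : ℂ))⁻¹
        (StmtAux.eta_cases _) hrc hr2
    have expand : ∀ x : Fin (t + (s + 1)) → Fin 2,
        (∑ p, (starRingEnd ℂ) ((((sgn x • tailOp A M (((Real.sqrt 2 : ℂ))⁻¹ • (A 0 0 + (StmtAux.eta (wt x)) • A 0 1)) 0 x).mulVec ψ) - ψ) p) * (((sgn x • tailOp A M (((Real.sqrt 2 : ℂ))⁻¹ • (A 0 0 + (StmtAux.eta (wt x)) • A 0 1)) 0 x).mulVec ψ) - ψ) p)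
          + (∑ p, (starRingEnd ℂ) ((((sgn x • tailOp A M (((Real.sqrt 2 : ℂ))⁻¹ • (A 0 0 - (StmtAux.eta (wt x)) • A 0 1)) 1 x).mulVec ψ) - (StmtAux.eta (wt x)) • ψ) p) * (((sgn x • tailOp A M (((Real.sqrt 2 : ℂ))⁻¹ • (A 0 0 - (StmtAux.eta (wt x)) • A 0 1)) 1 x).mulVec ψ) - (StmtAux.eta (wt x)) • ψ) p)
        = 4 - (((∑ p, (starRingEnd ℂ) (ψ p) * ((sgn x • tailOp A M (((Real.sqrt 2 : ℂ))⁻¹ • (A 0 0 + (StmtAux.eta (wt x)) • A 0 1)) 0 x).mulVec ψ) p) + (StmtAux.eta (wt x)) * (∑ p, (starRingEnd ℂ) (ψ p) * ((sgn x • tailOp A M (((Real.sqrt 2 : ℂ))⁻¹ • (A 0 0 - (StmtAux.eta (wt x)) • A 0 1)) 1 x).mulVec ψ) p))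
            + (starRingEnd ℂ) ((∑ p, (starRingEnd ℂ) (ψ p) * ((sgn x • tailOp A M (((Real.sqrt 2 : ℂ))⁻¹ • (A 0 0 + (StmtAux.eta (wt x)) • A 0 1)) 0 x).mulVec ψ) p) + (StmtAux.eta (wt x)) * (∑ p, (starRingEnd ℂ) (ψ p) * ((sgn x • tailOp A M (((Real.sqrt 2 : ℂ))⁻¹ • (A 0 0 - (StmtAux.eta (wt x)) • A 0 1)) 1 x).mulVec ψ) p))) := by
      intro x
      have hec : (starRingEnd ℂ) (StmtAux.eta (wt x)) = StmtAux.eta (wt x) := by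
        rcases StmtAux.eta_cases (wt x) with h | h <;> rw [h] <;> simp
      have hee : StmtAux.eta (wt x) * StmtAux.eta (wt x) = 1 := StmtAux.eta_sq _
      have hz1 : ∑ p, (starRingEnd ℂ) (((StmtAux.eta (wt x)) • ψ) p) * ((StmtAux.eta (wt x)) • ψ) p = 1 := by
        have hthis : ∀ p : FullIdx t d dD, (starRingEnd ℂ) (((StmtAux.eta (wt x)) • ψ) p) * ((StmtAux.eta (wt x)) • ψ) p
            = (starRingEnd ℂ) (ψ p) * ψ p := by
          intro p
          simp only [Pi.smul_apply, smul_eq_mul, _root_.map_mul]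
          calc (starRingEnd ℂ) (StmtAux.eta (wt x)) * (starRingEnd ℂ) (ψ p) * ((StmtAux.eta (wt x)) * ψ p)
              = ((starRingEnd ℂ) (StmtAux.eta (wt x)) * (StmtAux.eta (wt x))) * ((starRingEnd ℂ) (ψ p) * ψ p) := by ring
            _ = (starRingEnd ℂ) (ψ p) * ψ p := by rw [hec, hee, one_mul]
        rw [Finset.sum_congr rfl fun p _ => hthis p, hψc]
      have hz2 : ∑ p, (starRingEnd ℂ) (((StmtAux.eta (wt x)) • ψ) p) * ((sgn x • tailOp A M (((Real.sqrt 2 : ℂ))⁻¹ • (A 0 0 - (StmtAux.eta (wt x)) • A 0 1)) 1 x).mulVec ψ) p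
          = (StmtAux.eta (wt x)) * (∑ p, (starRingEnd ℂ) (ψ p) * ((sgn x • tailOp A M (((Real.sqrt 2 : ℂ))⁻¹ • (A 0 0 - (StmtAux.eta (wt x)) • A 0 1)) 1 x).mulVec ψ) p) := by
        rw [Finset.mul_sum]
        refine Finset.sum_congr rfl fun p _ => ?_
        simp only [Pi.smul_apply, smul_eq_mul, _root_.map_mul]
        rw [hec]
        ring
      rw [expand_gen ((sgn x • tailOp A M (((Real.sqrt 2 : ℂ))⁻¹ • (A 0 0 + (StmtAux.eta (wt x)) • A 0 1)) 0 x).mulVec ψ) ψ, expand_gen ((sgn x • tailOp A M (((Real.sqrt 2 : ℂ))⁻¹ • (A 0 0 - (StmtAux.eta (wt x)) • A 0 1)) 1 x).mulVec ψ) ((StmtAux.eta (wt x)) • ψ), hψc, hz1, hz2]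
      rw [_root_.map_add ((starRingEnd ℂ)) (∑ p, (starRingEnd ℂ) (ψ p) * ((sgn x • tailOp A M (((Real.sqrt 2 : ℂ))⁻¹ • (A 0 0 + (StmtAux.eta (wt x)) • A 0 1)) 0 x).mulVec ψ) p) ((StmtAux.eta (wt x)) * (∑ p, (starRingEnd ℂ) (ψ p) * ((sgn x • tailOp A M (((Real.sqrt 2 : ℂ))⁻¹ • (A 0 0 - (StmtAux.eta (wt x)) • A 0 1)) 1 x).mulVec ψ) p))]
      linear_combination hpair x
    have key : ∑ x : Fin (t + (s + 1)) → Fin 2,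
        ((∑ p, (starRingEnd ℂ) ((((sgn x • tailOp A M (((Real.sqrt 2 : ℂ))⁻¹ • (A 0 0 + (StmtAux.eta (wt x)) • A 0 1)) 0 x).mulVec ψ) - ψ) p) * (((sgn x • tailOp A M (((Real.sqrt 2 : ℂ))⁻¹ • (A 0 0 + (StmtAux.eta (wt x)) • A 0 1)) 0 x).mulVec ψ) - ψ) p)
          + (∑ p, (starRingEnd ℂ) ((((sgn x • tailOp A M (((Real.sqrt 2 : ℂ))⁻¹ • (A 0 0 - (StmtAux.eta (wt x)) • A 0 1)) 1 x).mulVec ψ) - (StmtAux.eta (wt x)) • ψ) p) * (((sgn x • tailOp A M (((Real.sqrt 2 : ℂ))⁻¹ • (A 0 0 - (StmtAux.eta (wt x)) • A 0 1)) 1 x).mulVec ψ) - (StmtAux.eta (wt x)) • ψ) p)) = 0 := by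
      rw [Finset.sum_congr rfl fun x _ => expand x]
      rw [Finset.sum_sub_distrib, Finset.sum_add_distrib, ← map_sum, hcross]
      rw [Finset.sum_const, Finset.card_univ]
      have hcard : Fintype.card (Fin (t + (s + 1)) → Fin 2) = 2 ^ (t + s + 1) := by
        rw [Fintype.card_fun]
        simp only [Fintype.card_fin]
        exact congrArg (fun n => 2 ^ n) (by omega : t + (s + 1) = t + s + 1)
      rw [hcard]
      have hconjK : (starRingEnd ℂ) ((2:ℂ) ^ (t + s + 2)) = 2 ^ (t + s + 2) := by
        rw [map_pow]
        congr 1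
        exact map_ofNat (starRingEnd ℂ) 2
      rw [hconjK, nsmul_eq_mul]
      push_cast
      rw [pow_succ]
      ring
    have hcast : ∀ v : FullIdx t d dD → ℂ,
        ∑ p, (starRingEnd ℂ) (v p) * v p = ((∑ p, ‖v p‖ ^ 2 : ℝ) : ℂ) := by
      intro v
      rw [Complex.ofReal_sum]
      exact Finset.sum_congr rfl fun p _ => by rw [RCLike.conj_mul, Complex.ofReal_pow]; norm_num
    have keyR : ∑ x : Fin (t + (s + 1)) → Fin 2,
        ((∑ p, ‖(((sgn x • tailOp A M (((Real.sqrt 2 : ℂ))⁻¹ • (A 0 0 + (StmtAux.eta (wt x)) • A 0 1)) 0 x).mulVec ψ) - ψ) p‖ ^ 2) + (∑ p, ‖(((sgn x • tailOp A M (((Real.sqrt 2 : ℂ))⁻¹ • (A 0 0 - (StmtAux.eta (wt x)) • A 0 1)) 1 x).mulVec ψ) - (StmtAux.eta (wt x)) • ψ) p‖ ^ 2)) = (0:ℝ) := by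
      have h2 : ((∑ x : Fin (t + (s + 1)) → Fin 2,
          ((∑ p, ‖(((sgn x • tailOp A M (((Real.sqrt 2 : ℂ))⁻¹ • (A 0 0 + (StmtAux.eta (wt x)) • A 0 1)) 0 x).mulVec ψ) - ψ) p‖ ^ 2) + (∑ p, ‖(((sgn x • tailOp A M (((Real.sqrt 2 : ℂ))⁻¹ • (A 0 0 - (StmtAux.eta (wt x)) • A 0 1)) 1 x).mulVec ψ) - (StmtAux.eta (wt x)) • ψ) p‖ ^ 2)) : ℝ) : ℂ) = 0 := by
        rw [Complex.ofReal_sum, ← key]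
        refine Finset.sum_congr rfl fun x _ => ?_
        rw [Complex.ofReal_add, hcast ((((sgn x • tailOp A M (((Real.sqrt 2 : ℂ))⁻¹ • (A 0 0 + (StmtAux.eta (wt x)) • A 0 1)) 0 x).mulVec ψ) - ψ)), hcast ((((sgn x • tailOp A M (((Real.sqrt 2 : ℂ))⁻¹ • (A 0 0 - (StmtAux.eta (wt x)) • A 0 1)) 1 x).mulVec ψ) - (StmtAux.eta (wt x)) • ψ))]
      exact_mod_cast h2
    have hzero := (Finset.sum_eq_zero_iff_of_nonneg (fun x _ =>
      add_nonneg (Finset.sum_nonneg fun p _ => sq_nonneg _)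
        (Finset.sum_nonneg fun p _ => sq_nonneg _))).mp keyR
    intro x
    have hx := hzero x (Finset.mem_univ x)
    have hn0 : (0:ℝ) ≤ ∑ p, ‖(((sgn x • tailOp A M (((Real.sqrt 2 : ℂ))⁻¹ • (A 0 0 + (StmtAux.eta (wt x)) • A 0 1)) 0 x).mulVec ψ) - ψ) p‖ ^ 2 := Finset.sum_nonneg fun p _ => sq_nonneg _
    have hn1 : (0:ℝ) ≤ ∑ p, ‖(((sgn x • tailOp A M (((Real.sqrt 2 : ℂ))⁻¹ • (A 0 0 - (StmtAux.eta (wt x)) • A 0 1)) 1 x).mulVec ψ) - (StmtAux.eta (wt x)) • ψ) p‖ ^ 2 := Finset.sum_nonneg fun p _ => sq_nonneg _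
    have h00 : ∑ p, ‖(((sgn x • tailOp A M (((Real.sqrt 2 : ℂ))⁻¹ • (A 0 0 + (StmtAux.eta (wt x)) • A 0 1)) 0 x).mulVec ψ) - ψ) p‖ ^ 2 = 0 := by linarith
    have h11 : ∑ p, ‖(((sgn x • tailOp A M (((Real.sqrt 2 : ℂ))⁻¹ • (A 0 0 - (StmtAux.eta (wt x)) • A 0 1)) 1 x).mulVec ψ) - (StmtAux.eta (wt x)) • ψ) p‖ ^ 2 = 0 := by linarith
    have hv0 : ∀ p, (((sgn x • tailOp A M (((Real.sqrt 2 : ℂ))⁻¹ • (A 0 0 + (StmtAux.eta (wt x)) • A 0 1)) 0 x).mulVec ψ) - ψ) p = 0 := by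
      intro p
      have h := (Finset.sum_eq_zero_iff_of_nonneg (fun p _ => sq_nonneg ‖(((sgn x • tailOp A M (((Real.sqrt 2 : ℂ))⁻¹ • (A 0 0 + (StmtAux.eta (wt x)) • A 0 1)) 0 x).mulVec ψ) - ψ) p‖)).mp h00 p
        (Finset.mem_univ p)
      rw [pow_eq_zero_iff (two_ne_zero)] at h
      exact norm_eq_zero.mp h
    have hv1 : ∀ p, (((sgn x • tailOp A M (((Real.sqrt 2 : ℂ))⁻¹ • (A 0 0 - (StmtAux.eta (wt x)) • A 0 1)) 1 x).mulVec ψ) - (StmtAux.eta (wt x)) • ψ) p = 0 := by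
      intro p
      have h := (Finset.sum_eq_zero_iff_of_nonneg (fun p _ => sq_nonneg ‖(((sgn x • tailOp A M (((Real.sqrt 2 : ℂ))⁻¹ • (A 0 0 - (StmtAux.eta (wt x)) • A 0 1)) 1 x).mulVec ψ) - (StmtAux.eta (wt x)) • ψ) p‖)).mp h11 p
        (Finset.mem_univ p)
      rw [pow_eq_zero_iff (two_ne_zero)] at h
      exact norm_eq_zero.mp h
    constructor
    · exact sub_eq_zero.mp (funext hv0)
    · exact sub_eq_zero.mp (funext hv1)
  intro x
  have hm := main x
  constructor
  · intro hodd
    have he : StmtAux.eta (wt x) = 1 := StmtAux.eta_of_odd hodd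
    constructor
    · have h := hm.1
      rw [he, one_smul] at h
      exact h
    · have h := hm.2
      rw [he, one_smul, one_smul] at h
      exact h
  · intro heven
    have he : StmtAux.eta (wt x) = -1 := StmtAux.eta_of_even heven
    constructor
    · have h := hm.1
      rw [he, neg_one_smul, ← sub_eq_add_neg] at h
      exact h
    · have h := hm.2
      rw [he, neg_one_smul, sub_neg_eq_add, neg_one_smul] at h
      exact h
end
end
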